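/- arXiv:2306.01947 — 9 statements merged into one kernel-verified Lean document; each statement's English description precedes it below -/
import Mathlib

section
/- Let a, b, u be positive integers with u ≤ min(a,b). Let C be a set of lattice points contained in the rectangle [1,a]×[1,b]. If there exists a collection of u pairwise vertex-disjoint lattice paths (with steps east (0,1) and north (-1,0) in matrix coordinates) connecting the points ((a-u+p,1)) for p=1,…,u to the points ((p,b)) for p=1,…,u whose union contains C, then every diagonal chain in C (i.e., every subset {(i_1,j_1),…,(i_s,j_s)} with i_1<…<i_s and j_1<…<j_s) has size at most u. -/
/-- A diagonal chain: a finite set of points in ℤ² that is strictly increasing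
in both coordinates. -/
def IsDiagChain (D : Finset (ℤ × ℤ)) : Prop :=
  ∀ P ∈ D, ∀ Q ∈ D, P ≠ Q → (P.1 < Q.1 ∧ P.2 < Q.2) ∨ (Q.1 < P.1 ∧ Q.2 < P.2)

/-- A lattice path in matrix coordinates: a nonempty list of points in ℤ² where
consecutive points differ by an east step (0,1) or a north step (-1,0). -/
def IsLatticePath (P : List (ℤ × ℤ)) : Prop :=
  P ≠ [] ∧ P.Chain' (fun A B => B = (A.1, A.2 + 1) ∨ B = (A.1 - 1, A.2))

/-- Along a lattice path, any two points are comparable: the later one has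
smaller-or-equal first coordinate and larger-or-equal second coordinate. -/
lemma latticePath_comparable {L : List (ℤ × ℤ)} (hL : IsLatticePath L)
    {x y : ℤ × ℤ} (hx : x ∈ L) (hy : y ∈ L) :
    (y.1 ≤ x.1 ∧ x.2 ≤ y.2) ∨ (x.1 ≤ y.1 ∧ y.2 ≤ x.2) := by
  have hmono : L.Chain' (fun A B : ℤ × ℤ => B.1 ≤ A.1 ∧ A.2 ≤ B.2) := by
    refine hL.2.imp ?_
    rintro A B (rfl | rfl) <;> simp <;> omega
  haveI htrans : IsTrans (ℤ × ℤ) (fun A B : ℤ × ℤ => B.1 ≤ A.1 ∧ A.2 ≤ B.2) :=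
    ⟨fun A B C h1 h2 => ⟨h2.1.trans h1.1, h1.2.trans h2.2⟩⟩
  have hpw : L.Pairwise (fun A B : ℤ × ℤ => B.1 ≤ A.1 ∧ A.2 ≤ B.2) :=
    (List.isChain_iff_pairwise (R := fun A B : ℤ × ℤ => B.1 ≤ A.1 ∧ A.2 ≤ B.2)).mp hmono
  rcases List.mem_iff_get.mp hx with ⟨i, rfl⟩
  rcases List.mem_iff_get.mp hy with ⟨j, rfl⟩
  rw [List.pairwise_iff_get] at hpw
  rcases lt_trichotomy i j with h | h | h
  · exact Or.inl (hpw i j h)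
  · subst h; exact Or.inl ⟨le_rfl, le_rfl⟩
  · exact Or.inr (hpw j i h)

theorem stmt0 (a b u : ℕ) (ha : 0 < a) (hb : 0 < b) (hu : 0 < u)
    (hua : u ≤ a) (hub : u ≤ b)
    (C : Set (ℤ × ℤ))
    (hC : C ⊆ {P : ℤ × ℤ | 1 ≤ P.1 ∧ P.1 ≤ (a : ℤ) ∧ 1 ≤ P.2 ∧ P.2 ≤ (b : ℤ)})
    (H : Fin u → List (ℤ × ℤ))
    (hpath : ∀ p, IsLatticePath (H p))
    (hstart : ∀ p : Fin u, (H p).head? = some ((a : ℤ) - (u : ℤ) + ((p : ℕ) : ℤ) + 1, 1))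
    (hend : ∀ p : Fin u, (H p).getLast? = some (((p : ℕ) : ℤ) + 1, (b : ℤ)))
    (hdisj : ∀ p q : Fin u, p ≠ q → ∀ x ∈ H p, x ∉ H q)
    (hcover : ∀ x ∈ C, ∃ p, x ∈ H p)
    (D : Finset (ℤ × ℤ)) (hD : ↑D ⊆ C) (hchain : IsDiagChain D) :
    D.card ≤ u := by
  -- choose for each point of D a path containing it
  haveI : Nonempty (Fin u) := ⟨⟨0, hu⟩⟩
  have hex : ∀ x ∈ D, ∃ p : Fin u, x ∈ H p := fun x hx => hcover x (hD hx)
  choose f hf using hex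
  have : D.card ≤ (Finset.univ : Finset (Fin u)).card := by
    apply Finset.card_le_card_of_injOn (fun x => if hx : x ∈ D then f x hx else Classical.arbitrary _)
    · intro x _; exact Finset.mem_univ _
    · intro x hx y hy hxy
      simp only [Finset.mem_coe] at hx hy
      simp only [dif_pos hx, dif_pos hy] at hxy
      by_contra hne
      have hxP : x ∈ H (f x hx) := hf x hx
      have hyP : y ∈ H (f x hx) := hxy ▸ hf y hy
      have hcomp := latticePath_comparable (hpath (f x hx)) hxP hyP
      rcases hchain x hx y hy hne with ⟨h1, h2⟩ | ⟨h1, h2⟩ <;>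
        rcases hcomp with ⟨h3, h4⟩ | ⟨h3, h4⟩ <;> omega
  simpa using this
end

section
/- Let a, b, u be positive integers with u ≤ min(a,b). Let C be a set of lattice points contained in the rectangle [1,a]×[1,b] such that every diagonal chain in C has size at most u. Then there exists a collection of u pairwise vertex-disjoint lattice paths (with steps east (0,1) and north (-1,0) in matrix coordinates) connecting ((a-u+p,1)) for p=1,…,u to ((p,b)) for p=1,…,u whose union contains C. -/
/-!
Let `diagRank C x` be the size of a largest diagonal chain of `C` weakly north-west of `x`.
Adjusted at the boundary (`pathLevel`), it becomes a monotone function `g` on `ℤ²` that grows by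
at most one along each diagonal step `(i - 1, j - 1) → (i, j)`, and strictly at every point of
`C`; on the rectangle its values on `C` lie in `[1, u]`. The `p`-th path runs in column `j` from
the first row where `g` reaches `p` in column `j - 1` north to the first row where it reaches `p`
in column `j`. The diagonal bound puts the path of level `p` strictly north of the path of level
`p + 1` in every column, and a point of `C`, where `g` jumps along the diagonal, lies on the path
of its own level `g x`.
-/

def LatticeStep (A B : ℤ × ℤ) : Prop :=
  B = (A.1, A.2 + 1) ∨ B = (A.1 - 1, A.2)

section Staircase

def columnSegment (top bot j : ℤ) : List (ℤ × ℤ) :=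
  (List.range ((top - bot).toNat + 1)).map fun t : ℕ => (top - t, j)

variable {top bot j : ℤ} {x : ℤ × ℤ}

lemma columnSegment_ne_nil : columnSegment top bot j ≠ [] := by
  simp [columnSegment]

lemma columnSegment_head? : (columnSegment top bot j).head? = some (top, j) := by
  simp [columnSegment, List.range_succ_eq_map]

lemma columnSegment_getLast? (h : bot ≤ top) :
    (columnSegment top bot j).getLast? = some (bot, j) := by
  simp only [columnSegment, List.range_succ, List.map_append, List.map_cons, List.map_nil,
    List.getLast?_concat, Option.some.injEq, Prod.mk.injEq, and_true]
  omega

lemma columnSegment_isChain : (columnSegment top bot j).IsChain LatticeStep := by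
  rw [columnSegment, List.isChain_map, List.isChain_range_succ]
  intro m _
  right
  simp only [Nat.cast_succ, Prod.mk.injEq, and_true]
  ring

lemma mem_columnSegment (h : bot ≤ top) :
    x ∈ columnSegment top bot j ↔ x.2 = j ∧ bot ≤ x.1 ∧ x.1 ≤ top := by
  obtain ⟨i, k⟩ := x
  simp only [columnSegment, List.mem_map, List.mem_range, Prod.mk.injEq]
  constructor
  · rintro ⟨t, ht, rfl, rfl⟩
    omega
  · rintro ⟨rfl, h1, h2⟩
    exact ⟨(top - i).toNat, by omega, by omega, rfl⟩

/-- The lattice path through columns `1, …, n` that runs in column `j` from row `r (j - 1)`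
north to row `r j`. -/
def staircase (r : ℤ → ℤ) : ℕ → List (ℤ × ℤ)
  | 0 => []
  | n + 1 => staircase r n ++ columnSegment (r n) (r (n + 1)) (n + 1)

variable {r : ℤ → ℤ} {n : ℕ}

lemma staircase_head? (hn : n ≠ 0) : (staircase r n).head? = some (r 0, 1) := by
  induction n with
  | zero => contradiction
  | succ n ih =>
    rcases eq_or_ne n 0 with rfl | hn
    · simp [staircase, columnSegment_head?]
    · simp [staircase, List.head?_append, ih hn]

lemma staircase_getLast? (hr : ∀ j, r (j + 1) ≤ r j) (hn : n ≠ 0) :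
    (staircase r n).getLast? = some (r n, (n : ℤ)) := by
  obtain ⟨n, rfl⟩ := Nat.exists_eq_succ_of_ne_zero hn
  rw [staircase, List.getLast?_append_of_ne_nil _ columnSegment_ne_nil,
    columnSegment_getLast? (hr n)]
  push_cast
  rfl

lemma staircase_isChain (hr : ∀ j, r (j + 1) ≤ r j) : (staircase r n).IsChain LatticeStep := by
  induction n with
  | zero => exact List.IsChain.nil
  | succ n ih =>
    refine ih.append columnSegment_isChain fun A hA B hB => ?_
    rw [columnSegment_head?, Option.mem_some_iff] at hB
    rcases eq_or_ne n 0 with rfl | hn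
    · simp [staircase] at hA
    · rw [staircase_getLast? hr hn, Option.mem_some_iff] at hA
      subst hA hB
      left
      rfl

lemma staircase_isLatticePath (hr : ∀ j, r (j + 1) ≤ r j) (hn : n ≠ 0) :
    IsLatticePath (staircase r n) :=
  ⟨fun h => by simpa [h] using staircase_head? (r := r) hn, staircase_isChain hr⟩

lemma mem_staircase (hr : ∀ j, r (j + 1) ≤ r j) :
    x ∈ staircase r n ↔ 1 ≤ x.2 ∧ x.2 ≤ n ∧ r x.2 ≤ x.1 ∧ x.1 ≤ r (x.2 - 1) := by
  obtain ⟨i, k⟩ := x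
  induction n with
  | zero => simp only [staircase, List.not_mem_nil, false_iff]; omega
  | succ n ih =>
    rw [staircase, List.mem_append, ih, mem_columnSegment (hr n)]
    constructor
    · rintro (⟨h1, h2, h3⟩ | ⟨rfl, h3⟩)
      · exact ⟨h1, by omega, h3⟩
      · simpa using h3
    · rintro ⟨h1, h2, h3⟩
      rcases lt_or_eq_of_le h2 with h2 | rfl
      · exact Or.inl ⟨h1, by omega, h3⟩
      · right
        simpa using h3

end Staircase

section LevelRow

def levelSet (g : ℤ × ℤ → ℤ) (p j : ℤ) : Set ℤ := {i | p ≤ g (i, j)}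

def LevelBounded (g : ℤ × ℤ → ℤ) (p : ℤ) : Prop :=
  ∀ j, (levelSet g p j).Nonempty ∧ BddBelow (levelSet g p j)

noncomputable def levelRow (g : ℤ × ℤ → ℤ) (p j : ℤ) : ℤ := sInf (levelSet g p j)

variable {g : ℤ × ℤ → ℤ} {p q i j : ℤ}

lemma le_apply_levelRow (hp : LevelBounded g p) (j : ℤ) : p ≤ g (levelRow g p j, j) :=
  Int.csInf_mem (hp j).1 (hp j).2

lemma levelRow_le (hp : LevelBounded g p) (h : p ≤ g (i, j)) : levelRow g p j ≤ i :=
  csInf_le (hp j).2 h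

lemma levelRow_eq_of_forall_iff {i₀ : ℤ} (h : ∀ i, p ≤ g (i, j) ↔ i₀ ≤ i) :
    levelRow g p j = i₀ := by
  rw [levelRow, show levelSet g p j = Set.Ici i₀ from Set.ext h, csInf_Ici]

lemma levelRow_succ_le (hg : Monotone g) (hp : LevelBounded g p) (j : ℤ) :
    levelRow g p (j + 1) ≤ levelRow g p j :=
  levelRow_le hp <| (le_apply_levelRow hp j).trans <| hg ⟨le_rfl, by simp⟩

lemma lt_levelRow_of_apply_lt (hg : Monotone g) (hp : LevelBounded g p) (h : g (i, j) < p) :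
    i < levelRow g p j := by
  by_contra! hle
  exact h.not_ge <| (le_apply_levelRow hp j).trans <| hg ⟨hle, le_rfl⟩

/-- If `g` reaches `q` at row `r` of column `j`, then it reaches `q - 1 ≥ p` at row `r - 1` of
column `j - 1`. -/
lemma levelRow_sub_one_lt (hdiag : ∀ i j, g (i, j) ≤ g (i - 1, j - 1) + 1)
    (hp : LevelBounded g p) (hq : LevelBounded g q) (hpq : p < q) (j : ℤ) :
    levelRow g p (j - 1) < levelRow g q j := by
  have hgq := (le_apply_levelRow hq j).trans (hdiag (levelRow g q j) j)
  have := levelRow_le (i := levelRow g q j - 1) (j := j - 1) hp (by omega)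
  omega

lemma notMem_staircase_levelRow (hg : Monotone g) (hdiag : ∀ i j, g (i, j) ≤ g (i - 1, j - 1) + 1)
    (hp : LevelBounded g p) (hq : LevelBounded g q) (hpq : p < q) {n : ℕ} {x : ℤ × ℤ}
    (hx : x ∈ staircase (levelRow g p) n) : x ∉ staircase (levelRow g q) n := by
  rw [mem_staircase (levelRow_succ_le hg hp)] at hx
  rw [mem_staircase (levelRow_succ_le hg hq)]
  have := levelRow_sub_one_lt hdiag hp hq hpq x.2
  omega

lemma mem_staircase_levelRow (hg : Monotone g) (hp : LevelBounded g (g (i, j)))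
    (hi : g (i - 1, j - 1) < g (i, j)) {n : ℕ} (hj : 1 ≤ j) (hjn : j ≤ n) :
    (i, j) ∈ staircase (levelRow g (g (i, j))) n := by
  rw [mem_staircase (levelRow_succ_le hg hp)]
  have := lt_levelRow_of_apply_lt hg hp hi
  exact ⟨hj, hjn, levelRow_le hp le_rfl, by simp only; omega⟩

end LevelRow

section DiagRank

lemma IsDiagChain.mono {D D' : Finset (ℤ × ℤ)} (hD : IsDiagChain D) (h : D' ⊆ D) :
    IsDiagChain D' :=
  fun P hP Q hQ => hD P (h hP) Q (h hQ)

lemma IsDiagChain.insert {D : Finset (ℤ × ℤ)} {x : ℤ × ℤ} (hD : IsDiagChain D)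
    (hx : ∀ P ∈ D, P.1 < x.1 ∧ P.2 < x.2) : IsDiagChain (insert x D) := by
  intro P hP Q hQ hPQ
  rw [Finset.mem_insert] at hP hQ
  rcases hP with rfl | hP <;> rcases hQ with rfl | hQ
  · exact absurd rfl hPQ
  · exact .inr (hx Q hQ)
  · exact .inl (hx P hP)
  · exact hD P hP Q hQ hPQ

lemma IsDiagChain.injOn_fst {D : Finset (ℤ × ℤ)} (hD : IsDiagChain D) :
    Set.InjOn Prod.fst (D : Set (ℤ × ℤ)) := by
  intro P hP Q hQ hPQ
  by_contra hne
  rcases hD P hP Q hQ hne with h | h <;> omega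

open Classical in
noncomputable def diagRank (C : Finset (ℤ × ℤ)) (x : ℤ × ℤ) : ℕ :=
  {D ∈ {P ∈ C | P ≤ x}.powerset | IsDiagChain D}.sup Finset.card

variable {C D : Finset (ℤ × ℤ)} {x : ℤ × ℤ}

lemma diagRank_le_iff {n : ℕ} :
    diagRank C x ≤ n ↔ ∀ D ⊆ C, IsDiagChain D → (∀ P ∈ D, P ≤ x) → D.card ≤ n := by
  simp only [diagRank, Finset.sup_le_iff, Finset.mem_filter, Finset.mem_powerset,
    Finset.subset_iff]
  grind

lemma card_le_diagRank (hDC : D ⊆ C) (hD : IsDiagChain D) (hx : ∀ P ∈ D, P ≤ x) :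
    D.card ≤ diagRank C x := by
  classical
  refine Finset.le_sup (f := Finset.card) ?_
  simp only [Finset.mem_filter, Finset.mem_powerset]
  exact ⟨fun P hP => Finset.mem_filter.2 ⟨hDC hP, hx P hP⟩, hD⟩

lemma exists_card_eq_diagRank (C : Finset (ℤ × ℤ)) (x : ℤ × ℤ) :
    ∃ D ⊆ C, IsDiagChain D ∧ (∀ P ∈ D, P ≤ x) ∧ D.card = diagRank C x := by
  classical
  obtain ⟨D, hD, hcard⟩ := Finset.exists_mem_eq_sup {D ∈ {P ∈ C | P ≤ x}.powerset | IsDiagChain D}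
    ⟨∅, by simp [IsDiagChain]⟩ Finset.card
  simp only [Finset.mem_filter, Finset.mem_powerset, Finset.subset_iff] at hD
  exact ⟨D, fun P hP => (hD.1 hP).1, hD.2, fun P hP => (hD.1 hP).2, hcard.symm⟩

lemma diagRank_mono (C : Finset (ℤ × ℤ)) : Monotone (diagRank C) := fun _ _ hxy =>
  diagRank_le_iff.2 fun _ hDC hD hx => card_le_diagRank hDC hD fun P hP => (hx P hP).trans hxy

lemma diagRank_eq_zero (h : ∀ P ∈ C, ¬ P ≤ x) : diagRank C x = 0 := by
  refine Nat.le_zero.1 (diagRank_le_iff.2 fun D hDC _ hx => ?_)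
  rw [Nat.le_zero, Finset.card_eq_zero, Finset.eq_empty_iff_forall_notMem]
  exact fun P hP => h P (hDC hP) (hx P hP)

lemma diagRank_le_toNat (hC : ∀ P ∈ C, 1 ≤ P.1) : diagRank C x ≤ x.1.toNat := by
  refine diagRank_le_iff.2 fun D hDC hD hx => ?_
  calc D.card = (D.image Prod.fst).card := (Finset.card_image_of_injOn hD.injOn_fst).symm
    _ ≤ (Finset.Icc 1 x.1).card := Finset.card_le_card fun i hi => by
        obtain ⟨P, hP, rfl⟩ := Finset.mem_image.1 hi
        exact Finset.mem_Icc.2 ⟨hC P (hDC hP), (hx P hP).1⟩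
    _ = x.1.toNat := by simp

/-- Dropping the lowest point of a diagonal chain leaves a chain north-west of `(i - 1, j - 1)`. -/
lemma diagRank_le_sub_one_add_one (i j : ℤ) :
    diagRank C (i, j) ≤ diagRank C (i - 1, j - 1) + 1 := by
  refine diagRank_le_iff.2 fun D hDC hD hx => ?_
  rcases D.eq_empty_or_nonempty with rfl | hne
  · simp
  obtain ⟨M, hM, hMmax⟩ := D.exists_max_image Prod.fst hne
  have hlt : ∀ P ∈ D.erase M, P ≤ (i - 1, j - 1) := by
    intro P hP
    obtain ⟨hPM, hP⟩ := Finset.mem_erase.1 hP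
    obtain ⟨hMi, hMj⟩ := hx M hM
    rcases hD P hP M hM hPM with h | h
    · exact ⟨by simp only at *; omega, by simp only at *; omega⟩
    · exact absurd (hMmax P hP) (by omega)
  calc D.card = (D.erase M).card + 1 := (Finset.card_erase_add_one hM).symm
    _ ≤ diagRank C (i - 1, j - 1) + 1 := by
        gcongr
        exact card_le_diagRank ((D.erase_subset M).trans hDC) (hD.mono (D.erase_subset M)) hlt

lemma diagRank_sub_one_lt {i j : ℤ} (h : (i, j) ∈ C) :
    diagRank C (i - 1, j - 1) < diagRank C (i, j) := by
  obtain ⟨D, hDC, hD, hx, hcard⟩ := exists_card_eq_diagRank C (i - 1, j - 1)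
  have hlt : ∀ P ∈ D, P.1 < i ∧ P.2 < j := fun P hP => by
    obtain ⟨hPi, hPj⟩ := hx P hP
    exact ⟨by simp only at hPi; omega, by simp only at hPj; omega⟩
  have hnotMem : (i, j) ∉ D := fun hmem => (hlt _ hmem).1.false
  calc diagRank C (i - 1, j - 1) < (insert (i, j) D).card := by
        rw [Finset.card_insert_of_notMem hnotMem]; omega
    _ ≤ diagRank C (i, j) := card_le_diagRank (Finset.insert_subset h hDC) (hD.insert hlt)
        (fun P hP => by
          rcases Finset.mem_insert.1 hP with rfl | hP
          · exact le_rfl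
          · exact ⟨(hlt P hP).1.le, (hlt P hP).2.le⟩)

end DiagRank

section PathLevel

/-- `diagRank C`, raised just enough that the level-`p` path must leave column `0` at row
`a - u + p` and reach column `b` at row `p`. -/
noncomputable def pathLevel (a b u : ℕ) (C : Finset (ℤ × ℤ)) (x : ℤ × ℤ) : ℤ :=
  max (max (diagRank C x : ℤ) (min x.1 (u - (b - x.2)))) (x.1 - (a - u))

variable {a b u : ℕ} {C : Finset (ℤ × ℤ)} {p i j : ℤ}

lemma pathLevel_monotone : Monotone (pathLevel a b u C) := by
  intro x y hxy
  have : (diagRank C x : ℤ) ≤ diagRank C y := by exact_mod_cast diagRank_mono C hxy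
  obtain ⟨h1, h2⟩ := hxy
  simp only [pathLevel]
  omega

lemma pathLevel_le_sub_one_add_one (i j : ℤ) :
    pathLevel a b u C (i, j) ≤ pathLevel a b u C (i - 1, j - 1) + 1 := by
  have : (diagRank C (i, j) : ℤ) ≤ diagRank C (i - 1, j - 1) + 1 := by
    exact_mod_cast diagRank_le_sub_one_add_one i j
  simp only [pathLevel]
  omega

lemma pathLevel_sub_one_lt (h : (i, j) ∈ C) :
    pathLevel a b u C (i - 1, j - 1) < pathLevel a b u C (i, j) := by
  have : (diagRank C (i - 1, j - 1) : ℤ) < diagRank C (i, j) := by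
    exact_mod_cast diagRank_sub_one_lt h
  simp only [pathLevel]
  omega

lemma pathLevel_nonneg (x : ℤ × ℤ) : 0 ≤ pathLevel a b u C x :=
  (le_max_left _ _).trans' <| (le_max_left _ _).trans' <| Int.natCast_nonneg _

lemma pathLevel_le (hchain : ∀ D ⊆ C, IsDiagChain D → D.card ≤ u) (hi : i ≤ a) (hj : j ≤ b) :
    pathLevel a b u C (i, j) ≤ u := by
  have : (diagRank C (i, j) : ℤ) ≤ u := by
    exact_mod_cast diagRank_le_iff.2 fun D hDC hD _ => hchain D hDC hD
  simp only [pathLevel]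
  omega

lemma pathLevel_nonpos (hC : ∀ P ∈ C, 1 ≤ P.1) (hua : u ≤ a) (hi : i ≤ 0) :
    pathLevel a b u C (i, j) ≤ 0 := by
  have : diagRank C (i, j) ≤ i.toNat := diagRank_le_toNat hC
  simp only [pathLevel]
  omega

lemma levelBounded_pathLevel (hC : ∀ P ∈ C, 1 ≤ P.1) (hua : u ≤ a) (hp : 1 ≤ p) (hpu : p ≤ u) :
    LevelBounded (pathLevel a b u C) p := by
  refine fun j => ⟨⟨a, by simp only [levelSet, pathLevel, Set.mem_ofPred_eq]; omega⟩, 1, ?_⟩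
  intro i hi
  by_contra! hi0
  have := pathLevel_nonpos (b := b) (j := j) hC hua (by omega : i ≤ 0)
  exact (hp.trans hi).not_gt (by omega)

lemma levelRow_pathLevel_zero (hC : ∀ P ∈ C, 1 ≤ P.2) (hub : u ≤ b) (hp : 1 ≤ p) :
    levelRow (pathLevel a b u C) p 0 = a - u + p := by
  refine levelRow_eq_of_forall_iff fun i => ?_
  have : diagRank C (i, 0) = 0 := diagRank_eq_zero fun P hP hle => by
    have := hC P hP
    have := hle.2
    simp only at this
    omega
  simp only [pathLevel, this]
  omega

lemma levelRow_pathLevel_b (hC : ∀ P ∈ C, 1 ≤ P.1) (hua : u ≤ a) (hp : 1 ≤ p) (hpu : p ≤ u) :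
    levelRow (pathLevel a b u C) p b = p := by
  refine levelRow_eq_of_forall_iff fun i => ?_
  have : diagRank C (i, b) ≤ i.toNat := diagRank_le_toNat hC
  simp only [pathLevel]
  omega

lemma exists_mem_staircase_pathLevel (hC : ∀ P ∈ C, 1 ≤ P.1 ∧ P.1 ≤ a ∧ 1 ≤ P.2 ∧ P.2 ≤ b)
    (hchain : ∀ D ⊆ C, IsDiagChain D → D.card ≤ u) (hua : u ≤ a) (hx : (i, j) ∈ C) :
    ∃ p : Fin u, (i, j) ∈ staircase (levelRow (pathLevel a b u C) ((p : ℕ) + 1)) b := by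
  obtain ⟨-, hia, hj1, hjb⟩ := hC _ hx
  have hlt := pathLevel_sub_one_lt (a := a) (b := b) (u := u) hx
  have : 0 ≤ pathLevel a b u C (i - 1, j - 1) := pathLevel_nonneg _
  have : pathLevel a b u C (i, j) ≤ u := pathLevel_le hchain hia hjb
  refine ⟨⟨(pathLevel a b u C (i, j) - 1).toNat, by omega⟩, ?_⟩
  rw [show ((pathLevel a b u C (i, j) - 1).toNat : ℤ) + 1 = pathLevel a b u C (i, j) by omega]
  exact mem_staircase_levelRow pathLevel_monotone
    (levelBounded_pathLevel (fun P hP => (hC P hP).1) hua (by omega) this) hlt hj1 hjb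

end PathLevel

theorem stmt1_general (a b u : ℕ) (hua : u ≤ a) (hub : u ≤ b)
    (C : Set (ℤ × ℤ))
    (hC : C ⊆ {P : ℤ × ℤ | 1 ≤ P.1 ∧ P.1 ≤ (a : ℤ) ∧ 1 ≤ P.2 ∧ P.2 ≤ (b : ℤ)})
    (hchain : ∀ D : Finset (ℤ × ℤ), ↑D ⊆ C → IsDiagChain D → D.card ≤ u) :
    ∃ H : Fin u → List (ℤ × ℤ),
      (∀ p, IsLatticePath (H p)) ∧
      (∀ p : Fin u, (H p).head? = some ((a : ℤ) - (u : ℤ) + ((p : ℕ) : ℤ) + 1, 1)) ∧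
      (∀ p : Fin u, (H p).getLast? = some (((p : ℕ) : ℤ) + 1, (b : ℤ))) ∧
      (∀ p q : Fin u, p ≠ q → ∀ x ∈ H p, x ∉ H q) ∧
      (∀ x ∈ C, ∃ p, x ∈ H p) := by
  obtain ⟨C, rfl⟩ := ((Set.finite_Icc ((1 : ℤ), (1 : ℤ)) (a, b)).subset fun P hP =>
    ⟨⟨(hC hP).1, (hC hP).2.2.1⟩, (hC hP).2.1, (hC hP).2.2.2⟩).exists_finset_coe
  replace hC : ∀ P ∈ C, 1 ≤ P.1 ∧ P.1 ≤ a ∧ 1 ≤ P.2 ∧ P.2 ≤ b := fun P hP => hC hP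
  replace hchain : ∀ D ⊆ C, IsDiagChain D → D.card ≤ u := fun D hD => hchain D (by simpa)
  set g := pathLevel a b u C
  have hlevel (p : Fin u) : LevelBounded g ((p : ℕ) + 1) :=
    levelBounded_pathLevel (fun P hP => (hC P hP).1) hua (by omega) (by have := p.isLt; omega)
  have hstep (p : Fin u) := levelRow_succ_le pathLevel_monotone (hlevel p)
  have hb (p : Fin u) : b ≠ 0 := by have := p.isLt; omega
  refine ⟨fun p => staircase (levelRow g ((p : ℕ) + 1)) b, fun p => ?_, fun p => ?_, fun p => ?_,
    fun p q hpq x hx => ?_, ?_⟩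
  · exact staircase_isLatticePath (hstep p) (hb p)
  · rw [staircase_head? (hb p), levelRow_pathLevel_zero (fun P hP => (hC P hP).2.2.1) hub
      (by omega), add_assoc]
  · rw [staircase_getLast? (hstep p) (hb p),
      levelRow_pathLevel_b (fun P hP => (hC P hP).1) hua (by omega) (by have := p.isLt; omega)]
  · rcases Fin.lt_or_lt_of_ne hpq with h | h
    · exact notMem_staircase_levelRow pathLevel_monotone pathLevel_le_sub_one_add_one
        (hlevel p) (hlevel q) (by simpa) hx
    · exact fun hx' => notMem_staircase_levelRow pathLevel_monotone pathLevel_le_sub_one_add_one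
        (hlevel q) (hlevel p) (by simpa) hx' hx
  · rintro ⟨i, j⟩ hx
    exact exists_mem_staircase_pathLevel hC hchain hua hx

theorem stmt1 (a b u : ℕ) (ha : 0 < a) (hb : 0 < b) (hu : 0 < u)
    (hua : u ≤ a) (hub : u ≤ b)
    (C : Set (ℤ × ℤ))
    (hC : C ⊆ {P : ℤ × ℤ | 1 ≤ P.1 ∧ P.1 ≤ (a : ℤ) ∧ 1 ≤ P.2 ∧ P.2 ≤ (b : ℤ)})
    (hchain : ∀ D : Finset (ℤ × ℤ), ↑D ⊆ C → IsDiagChain D → D.card ≤ u) :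
    ∃ H : Fin u → List (ℤ × ℤ),
      (∀ p, IsLatticePath (H p)) ∧
      (∀ p : Fin u, (H p).head? = some ((a : ℤ) - (u : ℤ) + ((p : ℕ) : ℤ) + 1, 1)) ∧
      (∀ p : Fin u, (H p).getLast? = some (((p : ℕ) : ℤ) + 1, (b : ℤ))) ∧
      (∀ p q : Fin u, p ≠ q → ∀ x ∈ H p, x ∉ H q) ∧
      (∀ x ∈ C, ∃ p, x ∈ H p) :=
  stmt1_general a b u hua hub C hC hchain
end

section
/- Let u, a, b be positive integers with u ≤ min(a-1, b). Suppose integers c_{pq}, d_{pq} ∈ [1,a] (for 1 ≤ p ≤ u, 1 ≤ q ≤ b) satisfy d_{pq} ≥ c_{pq}, c_{pq} ≥ d_{p,q+1} (for q < b), and c_{pq} > d_{p-1,q} (for p > 1). Then the sum over all p, q of (d_{pq} - c_{pq}) is at most (a-u)·u, with equality if and only if for all p, q: c_{pq} = d_{p,q+1} (for q < b), d_{p1} = a-u+p, and c_{pb} = p. -/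
/-!
Telescoping each row, `∑_q (d_pq - c_pq) = (d_p1 - c_pb) - ∑_{q<b} (c_pq - d_{p,q+1})`, and the
subtracted gaps are nonnegative. Along the first and last columns the entries increase strictly
with `p` (since `c ≤ d` and `d_{p-1,q} < c_pq`), so `c_pb ≥ p` and `d_p1 ≤ a - u + p`.
Hence every row contributes at most `a - u`, with equality exactly when all gaps vanish and
both column bounds are attained.
-/

open Finset

lemma sum_Icc_sub_eq_sub_sum_gaps (c d : ℤ → ℤ) {m n : ℤ} (hmn : m ≤ n) :
    ∑ q ∈ Icc m n, (d q - c q) = d m - c n - ∑ q ∈ Icc m (n - 1), (c q - d (q + 1)) := by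
  induction n, hmn using Int.leInduction with
  | base => simp
  | succ n hmn ih =>
    rw [← insert_Icc_right_eq_Icc_add_one (by omega), sum_insert (by simp), ih,
      add_sub_cancel_right, ← insert_Icc_sub_one_right_eq_Icc hmn, sum_insert (by simp)]
    ring

section Row

variable {c d : ℤ → ℤ} {m n : ℤ}

lemma sum_Icc_sub_le (hgap : ∀ q ∈ Icc m (n - 1), d (q + 1) ≤ c q) (hmn : m ≤ n) :
    ∑ q ∈ Icc m n, (d q - c q) ≤ d m - c n := by
  rw [sum_Icc_sub_eq_sub_sum_gaps c d hmn, sub_le_self_iff]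
  exact sum_nonneg fun q hq => sub_nonneg.2 (hgap q hq)

lemma sum_Icc_sub_eq_iff (hgap : ∀ q ∈ Icc m (n - 1), d (q + 1) ≤ c q) (hmn : m ≤ n) :
    ∑ q ∈ Icc m n, (d q - c q) = d m - c n ↔ ∀ q ∈ Icc m (n - 1), c q = d (q + 1) := by
  rw [sum_Icc_sub_eq_sub_sum_gaps c d hmn, sub_eq_self,
    sum_eq_zero_iff_of_nonneg fun q hq => sub_nonneg.2 (hgap q hq)]
  simp only [sub_eq_zero]

end Row

section Chain

variable {f : ℤ → ℤ}

lemma add_sub_le_of_forall_pred_lt {p r : ℤ} (hpr : p ≤ r)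
    (hf : ∀ q ∈ Ioc p r, f (q - 1) < f q) : f p + (r - p) ≤ f r := by
  induction r, hpr using Int.leInduction with
  | base => simp
  | succ r hpr ih =>
    have hstep := hf (r + 1) (mem_Ioc.2 ⟨by omega, le_rfl⟩)
    rw [add_sub_cancel_right] at hstep
    have := ih fun q hq => hf q (Ioc_subset_Ioc_right (by omega) hq)
    omega

variable {u : ℤ} (hf : ∀ p ∈ Ioc 1 u, f (p - 1) < f p)
include hf

lemma le_of_forall_pred_lt (hf1 : 1 ≤ f 1) : ∀ p ∈ Icc 1 u, p ≤ f p := by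
  intro p hp
  obtain ⟨hp1, hpu⟩ := mem_Icc.1 hp
  have := add_sub_le_of_forall_pred_lt hp1 fun q hq => hf q (Ioc_subset_Ioc_right hpu hq)
  omega

lemma le_sub_add_of_forall_pred_lt {a : ℤ} (hfu : f u ≤ a) :
    ∀ p ∈ Icc 1 u, f p ≤ a - u + p := by
  intro p hp
  obtain ⟨hp1, hpu⟩ := mem_Icc.1 hp
  have := add_sub_le_of_forall_pred_lt hpu fun q hq => hf q (Ioc_subset_Ioc_left hp1 hq)
  omega

end Chain

section Columns

variable {u b : ℤ} {c d : ℤ → ℤ → ℤ}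
  (h1 : ∀ p ∈ Icc 1 u, ∀ q ∈ Icc 1 b, c p q ≤ d p q)
  (h3 : ∀ p ∈ Icc 2 u, ∀ q ∈ Icc 1 b, d (p - 1) q < c p q)
include h1 h3

lemma column_c_pred_lt {q : ℤ} (hq : q ∈ Icc 1 b) : ∀ p ∈ Ioc 1 u, c (p - 1) q < c p q := by
  intro p hp
  obtain ⟨hp1, hpu⟩ := mem_Ioc.1 hp
  exact (h1 (p - 1) (mem_Icc.2 ⟨by omega, by omega⟩) q hq).trans_lt
    (h3 p (mem_Icc.2 ⟨by omega, hpu⟩) q hq)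

lemma column_d_pred_lt {q : ℤ} (hq : q ∈ Icc 1 b) : ∀ p ∈ Ioc 1 u, d (p - 1) q < d p q := by
  intro p hp
  obtain ⟨hp1, hpu⟩ := mem_Ioc.1 hp
  exact (h3 p (mem_Icc.2 ⟨by omega, hpu⟩) q hq).trans_le
    (h1 p (mem_Icc.2 ⟨by omega, hpu⟩) q hq)

end Columns

theorem stmt2_general (u a b : ℤ) (hu : 0 < u) (hb : 0 < b)
    (c d : ℤ → ℤ → ℤ)
    (hrange : ∀ p ∈ Finset.Icc 1 u, ∀ q ∈ Finset.Icc 1 b,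
      c p q ∈ Finset.Icc 1 a ∧ d p q ∈ Finset.Icc 1 a)
    (h1 : ∀ p ∈ Finset.Icc 1 u, ∀ q ∈ Finset.Icc 1 b, c p q ≤ d p q)
    (h2 : ∀ p ∈ Finset.Icc 1 u, ∀ q ∈ Finset.Icc 1 (b - 1), d p (q + 1) ≤ c p q)
    (h3 : ∀ p ∈ Finset.Icc 2 u, ∀ q ∈ Finset.Icc 1 b, d (p - 1) q < c p q) :
    (∑ p ∈ Finset.Icc 1 u, ∑ q ∈ Finset.Icc 1 b, (d p q - c p q)) ≤ (a - u) * u ∧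
    ((∑ p ∈ Finset.Icc 1 u, ∑ q ∈ Finset.Icc 1 b, (d p q - c p q)) = (a - u) * u ↔
      (∀ p ∈ Finset.Icc 1 u, ∀ q ∈ Finset.Icc 1 (b - 1), c p q = d p (q + 1)) ∧
      (∀ p ∈ Finset.Icc 1 u, d p 1 = a - u + p) ∧
      (∀ p ∈ Finset.Icc 1 u, c p b = p)) := by
  have hb1 : 1 ∈ Icc 1 b := mem_Icc.2 ⟨le_rfl, by omega⟩
  have hbb : b ∈ Icc 1 b := mem_Icc.2 ⟨by omega, le_rfl⟩
  have hc_last : ∀ p ∈ Icc 1 u, p ≤ c p b := le_of_forall_pred_lt (column_c_pred_lt h1 h3 hbb)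
    (mem_Icc.1 (hrange 1 (mem_Icc.2 ⟨le_rfl, by omega⟩) b hbb).1).1
  have hd_first : ∀ p ∈ Icc 1 u, d p 1 ≤ a - u + p :=
    le_sub_add_of_forall_pred_lt (column_d_pred_lt h1 h3 hb1)
      (mem_Icc.1 (hrange u (mem_Icc.2 ⟨by omega, le_rfl⟩) 1 hb1).2).2
  have hrow_le : ∀ p ∈ Icc 1 u, ∑ q ∈ Icc 1 b, (d p q - c p q) ≤ a - u := fun p hp => by
    linarith [sum_Icc_sub_le (h2 p hp) (by omega), hc_last p hp, hd_first p hp]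
  have hrow_eq : ∀ p ∈ Icc 1 u, (∑ q ∈ Icc 1 b, (d p q - c p q) = a - u ↔
      (∀ q ∈ Icc 1 (b - 1), c p q = d p (q + 1)) ∧ d p 1 = a - u + p ∧ c p b = p) := by
    intro p hp
    rw [← sum_Icc_sub_eq_iff (h2 p hp) (by omega)]
    have := sum_Icc_sub_le (h2 p hp) (by omega)
    have := hc_last p hp
    have := hd_first p hp
    omega
  have hconst : ∑ _p ∈ Icc 1 u, (a - u) = (a - u) * u := by
    rw [sum_const, Int.card_Icc, add_sub_cancel_right, nsmul_eq_mul,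
      Int.toNat_of_nonneg hu.le, mul_comm]
  rw [← hconst, sum_eq_sum_iff_of_le hrow_le]
  refine ⟨sum_le_sum hrow_le, ?_⟩
  rw [forall₂_congr hrow_eq]
  simp only [imp_and, forall_and]

theorem stmt2 (u a b : ℤ) (hu : 0 < u) (ha : 0 < a) (hb : 0 < b)
    (hua : u ≤ a - 1) (hub : u ≤ b)
    (c d : ℤ → ℤ → ℤ)
    (hrange : ∀ p ∈ Finset.Icc 1 u, ∀ q ∈ Finset.Icc 1 b,
      c p q ∈ Finset.Icc 1 a ∧ d p q ∈ Finset.Icc 1 a)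
    (h1 : ∀ p ∈ Finset.Icc 1 u, ∀ q ∈ Finset.Icc 1 b, c p q ≤ d p q)
    (h2 : ∀ p ∈ Finset.Icc 1 u, ∀ q ∈ Finset.Icc 1 (b - 1), d p (q + 1) ≤ c p q)
    (h3 : ∀ p ∈ Finset.Icc 2 u, ∀ q ∈ Finset.Icc 1 b, d (p - 1) q < c p q) :
    (∑ p ∈ Finset.Icc 1 u, ∑ q ∈ Finset.Icc 1 b, (d p q - c p q)) ≤ (a - u) * u ∧
    ((∑ p ∈ Finset.Icc 1 u, ∑ q ∈ Finset.Icc 1 b, (d p q - c p q)) = (a - u) * u ↔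
      (∀ p ∈ Finset.Icc 1 u, ∀ q ∈ Finset.Icc 1 (b - 1), c p q = d p (q + 1)) ∧
      (∀ p ∈ Finset.Icc 1 u, d p 1 = a - u + p) ∧
      (∀ p ∈ Finset.Icc 1 u, c p b = p)) :=
  stmt2_general u a b hu hb c d hrange h1 h2 h3
end

section
/- Let u, a, b be positive integers with u ≤ min(a-1, b), and suppose integers c_{pq}, d_{pq} ∈ [1,a] (for 1 ≤ p ≤ u, 1 ≤ q ≤ b) satisfy d_{pq} ≥ c_{pq}, c_{pq} ≥ d_{p,q+1} (for q < b), and c_{pq} > d_{p-1,q} (for p > 1). Then any diagonal chain contained in the set C := { (i,q) : 1 ≤ p ≤ u, 1 ≤ q ≤ b, c_{pq} ≤ i ≤ d_{pq} } has size at most u. -/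
theorem stmt3 (u a b : ℤ) (hu : 0 < u) (ha : 0 < a) (hb : 0 < b)
    (hua : u ≤ a - 1) (hub : u ≤ b)
    (c d : ℤ → ℤ → ℤ)
    (hrange : ∀ p ∈ Finset.Icc 1 u, ∀ q ∈ Finset.Icc 1 b,
      c p q ∈ Finset.Icc 1 a ∧ d p q ∈ Finset.Icc 1 a)
    (h1 : ∀ p ∈ Finset.Icc 1 u, ∀ q ∈ Finset.Icc 1 b, c p q ≤ d p q)
    (h2 : ∀ p ∈ Finset.Icc 1 u, ∀ q ∈ Finset.Icc 1 (b - 1), d p (q + 1) ≤ c p q)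
    (h3 : ∀ p ∈ Finset.Icc 2 u, ∀ q ∈ Finset.Icc 1 b, d (p - 1) q < c p q)
    (D : Finset (ℤ × ℤ))
    (hD : ↑D ⊆ {P : ℤ × ℤ | ∃ p ∈ Finset.Icc 1 u,
      P.2 ∈ Finset.Icc 1 b ∧ c p P.2 ≤ P.1 ∧ P.1 ≤ d p P.2})
    (hchain : IsDiagChain D) :
    (D.card : ℤ) ≤ u := by
  -- monotonicity: for q < q' in range, d p q' ≤ c p q
  have mono : ∀ p ∈ Finset.Icc 1 u, ∀ q : ℤ, 1 ≤ q → ∀ q' : ℤ, q < q' → q' ≤ b →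
      d p q' ≤ c p q := by
    intro p hp q hq q' hq'
    have base : q + 1 ≤ b → d p (q + 1) ≤ c p q := fun hle =>
      h2 p hp q (Finset.mem_Icc.mpr ⟨hq, by omega⟩)
    have step : ∀ n : ℤ, q + 1 ≤ n → (n ≤ b → d p n ≤ c p q) →
        (n + 1 ≤ b → d p (n + 1) ≤ c p q) := by
      intro n hn ih hle
      have hnb : n ≤ b := by omega
      have hnmem : n ∈ Finset.Icc 1 b := Finset.mem_Icc.mpr ⟨by omega, hnb⟩
      calc d p (n + 1) ≤ c p n := h2 p hp n (Finset.mem_Icc.mpr ⟨by omega, by omega⟩)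
        _ ≤ d p n := h1 p hp n hnmem
        _ ≤ c p q := ih hnb
    exact Int.le_induction base step q' (by omega)
  classical
  set f : ℤ × ℤ → ℤ := fun P =>
    if h : ∃ p ∈ Finset.Icc 1 u, P.2 ∈ Finset.Icc 1 b ∧ c p P.2 ≤ P.1 ∧ P.1 ≤ d p P.2
    then h.choose else 0 with hf
  have spec : ∀ P ∈ D, f P ∈ Finset.Icc 1 u ∧ P.2 ∈ Finset.Icc 1 b ∧
      c (f P) P.2 ≤ P.1 ∧ P.1 ≤ d (f P) P.2 := by
    intro P hP
    have h := hD hP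
    simp only [Set.mem_setOf_eq] at h
    rw [hf]
    simp only [dif_pos h]
    obtain ⟨hp1, hp2⟩ := h.choose_spec
    exact ⟨hp1, hp2⟩
  have hinj : Set.InjOn f ↑D := by
    intro P hP Q hQ hfeq
    by_contra hne
    obtain ⟨hfP, hPb, hPc, hPd⟩ := spec P hP
    obtain ⟨hfQ, hQb, hQc, hQd⟩ := spec Q hQ
    rw [hfeq] at hPc hPd
    rcases hchain P hP Q hQ hne with ⟨h1', h2'⟩ | ⟨h1', h2'⟩
    · have := mono (f Q) hfQ P.2 (Finset.mem_Icc.mp hPb).1 Q.2 h2'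
        (Finset.mem_Icc.mp hQb).2
      omega
    · have := mono (f Q) hfQ Q.2 (Finset.mem_Icc.mp hQb).1 P.2 h2'
        (Finset.mem_Icc.mp hPb).2
      omega
  have hmaps : ∀ P ∈ D, f P ∈ Finset.Icc 1 u := fun P hP => (spec P hP).1
  have hcard := Finset.card_le_card_of_injOn f hmaps hinj
  rw [Int.card_Icc] at hcard
  omega
end

section
/- Applying a horizontal chute move to a u-compatible subset C of L yields a u-compatible subset C'. Precisely: suppose there is a target vertex α and a 2×r rectangle (r ≥ 2) [i,i+1]×[j,j+r-1] inside [1,a_α]×[1,b_α] such that the only points of C^α in this rectangle are (i+1,j), (i,j+r-1), and (i+1,j+r-1). Then C' := (C ∪ {φ_α(i,j)}) \ {φ_α(i+1,j+r-1)} is also u-compatible. -/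
/-- A diagonal chain: a finite set of points in ℕ × ℕ that is strictly increasing
in both coordinates. -/
def DiagChainN (D : Finset (ℕ × ℕ)) : Prop :=
  ∀ P ∈ D, ∀ Q ∈ D, P ≠ Q → (P.1 < Q.1 ∧ P.2 < Q.2) ∨ (Q.1 < P.1 ∧ Q.2 < P.2)

/-- The data of a bipartite quiver: `ns` source vertices, `nt` target vertices,
`r` arrows with source `src` and target `tgt`, a dimension vector (`ms` on sources,
`mt` on targets) and a rank vector (`us` on sources, `ut` on targets). -/
structure BQData where
  ns : ℕ
  nt : ℕ
  r : ℕ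
  src : Fin r → Fin ns
  tgt : Fin r → Fin nt
  ms : Fin ns → ℕ
  mt : Fin nt → ℕ
  us : Fin ns → ℕ
  ut : Fin nt → ℕ

namespace BQData

variable (Q : BQData)

/-- Index type for matrix entries: (arrow k, row i, column j) of the matrix X^(k),
0-indexed. -/
abbrev Entry := Fin Q.r × ℕ × ℕ

/-- The index set L of all entries of the matrices X^(k): the matrix X^(k) has
`mt (tgt k)` rows and `ms (src k)` columns. -/
def L : Finset Q.Entry :=
  Finset.univ.biUnion fun k =>
    ((Finset.range (Q.mt (Q.tgt k))) ×ˢ (Finset.range (Q.ms (Q.src k)))).image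
      fun p => (k, p.1, p.2)

/-- Column offset of page k inside the block matrix A_{t(k)} (horizontal concatenation
over arrows with the same target, in increasing order of arrows). -/
def colOff (k : Fin Q.r) : ℕ :=
  ∑ k' ∈ Finset.univ.filter (fun k' => Q.tgt k' = Q.tgt k ∧ k' < k), Q.ms (Q.src k')

/-- Row offset of page k inside the block matrix A_{s(k)} (vertical concatenation
over arrows with the same source, in increasing order of arrows). -/
def rowOff (k : Fin Q.r) : ℕ :=
  ∑ k' ∈ Finset.univ.filter (fun k' => Q.src k' = Q.src k ∧ k' < k), Q.mt (Q.tgt k')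

/-- Position of an entry in the target block matrix A_{t(k)}. -/
def projT (x : Q.Entry) : ℕ × ℕ := (x.2.1, Q.colOff x.1 + x.2.2)

/-- Position of an entry in the source block matrix A_{s(k)}. -/
def projS (x : Q.Entry) : ℕ × ℕ := (Q.rowOff x.1 + x.2.1, x.2.2)

/-- Number of rows of A_α for a target vertex α. -/
def aT (α : Fin Q.nt) : ℕ := Q.mt α

/-- Number of columns of A_α for a target vertex α. -/
def bT (α : Fin Q.nt) : ℕ :=
  ∑ k ∈ Finset.univ.filter (fun k => Q.tgt k = α), Q.ms (Q.src k)

/-- Number of rows of A_β for a source vertex β. -/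
def aS (β : Fin Q.ns) : ℕ :=
  ∑ k ∈ Finset.univ.filter (fun k => Q.src k = β), Q.mt (Q.tgt k)

/-- Number of columns of A_β for a source vertex β. -/
def bS (β : Fin Q.ns) : ℕ := Q.ms β

/-- u-compatibility: for every vertex γ, the projection of C into the block matrix
A_γ contains no diagonal chain of size u_γ + 1. -/
def Compat (C : Finset Q.Entry) : Prop :=
  (∀ α : Fin Q.nt, ∀ D : Finset (ℕ × ℕ), DiagChainN D →
      (∀ P ∈ D, ∃ x ∈ C, Q.tgt x.1 = α ∧ Q.projT x = P) → D.card ≤ Q.ut α) ∧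
  (∀ β : Fin Q.ns, ∀ D : Finset (ℕ × ℕ), DiagChainN D →
      (∀ P ∈ D, ∃ x ∈ C, Q.src x.1 = β ∧ Q.projS x = P) → D.card ≤ Q.us β)

/-- The number N_{Q,m,u}. -/
def N : ℕ :=
  (∑ k : Fin Q.r, Q.us (Q.src k) * Q.ut (Q.tgt k)) +
    (∑ α : Fin Q.nt, Q.ut α * (Q.aT α - Q.ut α)) +
    (∑ β : Fin Q.ns, Q.us β * (Q.bS β - Q.us β))

end BQData

namespace BQData

variable {Q : BQData}

lemma mem_L_iff {x : Q.Entry} :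
    x ∈ Q.L ↔ x.2.1 < Q.mt (Q.tgt x.1) ∧ x.2.2 < Q.ms (Q.src x.1) := by
  obtain ⟨k, a, b⟩ := x
  simp only [L, Finset.mem_biUnion, Finset.mem_univ, true_and, Finset.mem_image,
    Finset.mem_product, Finset.mem_range, Prod.mk.injEq, Prod.exists]
  constructor
  · rintro ⟨k', a', b', ⟨h1, h2⟩, rfl, rfl, rfl⟩; exact ⟨h1, h2⟩
  · rintro ⟨h1, h2⟩; exact ⟨k, a, b, ⟨h1, h2⟩, rfl, rfl, rfl⟩

lemma colOff_add_le {k k' : Fin Q.r} (h : Q.tgt k = Q.tgt k') (hlt : k < k') :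
    Q.colOff k + Q.ms (Q.src k) ≤ Q.colOff k' := by
  unfold colOff
  have hk : k ∉ Finset.univ.filter (fun k'' => Q.tgt k'' = Q.tgt k ∧ k'' < k) := by simp
  have hsub : insert k (Finset.univ.filter (fun k'' => Q.tgt k'' = Q.tgt k ∧ k'' < k))
      ⊆ Finset.univ.filter (fun k'' => Q.tgt k'' = Q.tgt k' ∧ k'' < k') := by
    intro m hm
    simp only [Finset.mem_insert, Finset.mem_filter, Finset.mem_univ, true_and] at hm ⊢
    rcases hm with rfl | ⟨h1, h2⟩
    · exact ⟨h, hlt⟩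
    · exact ⟨h1.trans h, h2.trans hlt⟩
  calc (∑ m ∈ Finset.univ.filter (fun k'' => Q.tgt k'' = Q.tgt k ∧ k'' < k),
          Q.ms (Q.src m)) + Q.ms (Q.src k)
      = ∑ m ∈ insert k (Finset.univ.filter (fun k'' => Q.tgt k'' = Q.tgt k ∧ k'' < k)),
          Q.ms (Q.src m) := by rw [Finset.sum_insert hk, add_comm]
    _ ≤ _ := Finset.sum_le_sum_of_subset hsub

lemma rowOff_add_le {k k' : Fin Q.r} (h : Q.src k = Q.src k') (hlt : k < k') :
    Q.rowOff k + Q.mt (Q.tgt k) ≤ Q.rowOff k' := by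
  unfold rowOff
  have hk : k ∉ Finset.univ.filter (fun k'' => Q.src k'' = Q.src k ∧ k'' < k) := by simp
  have hsub : insert k (Finset.univ.filter (fun k'' => Q.src k'' = Q.src k ∧ k'' < k))
      ⊆ Finset.univ.filter (fun k'' => Q.src k'' = Q.src k' ∧ k'' < k') := by
    intro m hm
    simp only [Finset.mem_insert, Finset.mem_filter, Finset.mem_univ, true_and] at hm ⊢
    rcases hm with rfl | ⟨h1, h2⟩
    · exact ⟨h, hlt⟩
    · exact ⟨h1.trans h, h2.trans hlt⟩
  calc (∑ m ∈ Finset.univ.filter (fun k'' => Q.src k'' = Q.src k ∧ k'' < k),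
          Q.mt (Q.tgt m)) + Q.mt (Q.tgt k)
      = ∑ m ∈ insert k (Finset.univ.filter (fun k'' => Q.src k'' = Q.src k ∧ k'' < k)),
          Q.mt (Q.tgt m) := by rw [Finset.sum_insert hk, add_comm]
    _ ≤ _ := Finset.sum_le_sum_of_subset hsub

lemma col_unique {k k' : Fin Q.r} {c c' : ℕ} (h : Q.tgt k = Q.tgt k')
    (hc : c < Q.ms (Q.src k)) (hc' : c' < Q.ms (Q.src k'))
    (he : Q.colOff k + c = Q.colOff k' + c') : k = k' ∧ c = c' := by
  rcases lt_trichotomy k k' with hlt | heq | hlt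
  · have := colOff_add_le h hlt; omega
  · subst heq; exact ⟨rfl, by omega⟩
  · have := colOff_add_le h.symm hlt; omega

lemma row_unique {k k' : Fin Q.r} {c c' : ℕ} (h : Q.src k = Q.src k')
    (hc : c < Q.mt (Q.tgt k)) (hc' : c' < Q.mt (Q.tgt k'))
    (he : Q.rowOff k + c = Q.rowOff k' + c') : k = k' ∧ c = c' := by
  rcases lt_trichotomy k k' with hlt | heq | hlt
  · have := rowOff_add_le h hlt; omega
  · subst heq; exact ⟨rfl, by omega⟩
  · have := rowOff_add_le h.symm hlt; omega

end BQData

lemma chain_swap {D : Finset (ℕ × ℕ)} (hD : DiagChainN D) {Pt newPt : ℕ × ℕ}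
    (hPt : Pt ∈ D)
    (ha : ∀ R ∈ D, R ≠ Pt → (R.1 < newPt.1 ∧ R.2 < newPt.2) ∨
      (newPt.1 < R.1 ∧ newPt.2 < R.2)) :
    DiagChainN (insert newPt (D.erase Pt)) ∧
      (insert newPt (D.erase Pt)).card = D.card := by
  have hnot : newPt ∉ D.erase Pt := by
    intro h
    rcases ha newPt (Finset.mem_of_mem_erase h) (Finset.ne_of_mem_erase h) with
      ⟨h1, _⟩ | ⟨h1, _⟩ <;> exact absurd h1 (lt_irrefl _)
  constructor
  · intro A hA B hB hne
    rcases Finset.mem_insert.mp hA with rfl | hA' <;>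
      rcases Finset.mem_insert.mp hB with hB' | hB'
    · exact absurd hB'.symm hne
    · rcases ha B (Finset.mem_of_mem_erase hB') (Finset.ne_of_mem_erase hB') with
        ⟨h1, h2⟩ | ⟨h1, h2⟩
      · exact Or.inr ⟨h1, h2⟩
      · exact Or.inl ⟨h1, h2⟩
    · subst hB'
      rcases ha A (Finset.mem_of_mem_erase hA') (Finset.ne_of_mem_erase hA') with
        ⟨h1, h2⟩ | ⟨h1, h2⟩
      · exact Or.inl ⟨h1, h2⟩
      · exact Or.inr ⟨h1, h2⟩
    · exact hD A (Finset.mem_of_mem_erase hA') B (Finset.mem_of_mem_erase hB') hne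
  · have hpos : 0 < D.card := Finset.card_pos.mpr ⟨Pt, hPt⟩
    rw [Finset.card_insert_of_notMem hnot, Finset.card_erase_of_mem hPt]
    omega
/-- A horizontal chute move sends a u-compatible subset of L to a u-compatible subset:
if the only points of C^α inside the 2×w rectangle with rows i,i+1 and columns
j,…,j+w-1 of A_α are the SW, NE and SE corners, then replacing the SE corner by the
NW corner preserves u-compatibility. -/
theorem stmt8 (Q : BQData)
    (hut : ∀ α : Fin Q.nt, 0 < Q.ut α ∧ Q.ut α ≤ min (Q.aT α) (Q.bT α))
    (hus : ∀ β : Fin Q.ns, 0 < Q.us β ∧ Q.us β ≤ min (Q.aS β) (Q.bS β))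
    (C : Finset Q.Entry) (hCL : C ⊆ Q.L) (hcompat : Q.Compat C)
    (α : Fin Q.nt) (i j w : ℕ) (hw : 2 ≤ w)
    (hrect : i + 2 ≤ Q.aT α ∧ j + w ≤ Q.bT α)
    (P Qe : Q.Entry) (hPL : P ∈ Q.L) (hQeC : Qe ∈ C)
    (hPα : Q.tgt P.1 = α) (hQα : Q.tgt Qe.1 = α)
    (hPproj : Q.projT P = (i, j)) (hQproj : Q.projT Qe = (i + 1, j + (w - 1)))
    (hSW : ∃ x ∈ C, Q.tgt x.1 = α ∧ Q.projT x = (i + 1, j))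
    (hNE : ∃ x ∈ C, Q.tgt x.1 = α ∧ Q.projT x = (i, j + (w - 1)))
    (honly : ∀ x ∈ C, Q.tgt x.1 = α →
      i ≤ (Q.projT x).1 → (Q.projT x).1 ≤ i + 1 →
      j ≤ (Q.projT x).2 → (Q.projT x).2 ≤ j + (w - 1) →
      Q.projT x = (i + 1, j) ∨ Q.projT x = (i, j + (w - 1)) ∨
        Q.projT x = (i + 1, j + (w - 1))) :
    Q.Compat (insert P (C.erase Qe)) := by
  obtain ⟨hcT, hcS⟩ := hcompat
  have hw1 : 1 ≤ w - 1 := by omega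
  have hPLb := BQData.mem_L_iff.mp hPL
  have hQeL := BQData.mem_L_iff.mp (hCL hQeC)
  have hPp : P.2.1 = i ∧ Q.colOff P.1 + P.2.2 = j := by
    simpa [BQData.projT, Prod.ext_iff] using hPproj
  have hQp : Qe.2.1 = i + 1 ∧ Q.colOff Qe.1 + Qe.2.2 = j + (w - 1) := by
    simpa [BQData.projT, Prod.ext_iff] using hQproj
  constructor
  · -- target side
    intro γ D hD hwit
    by_cases hall : ∀ R ∈ D, ∃ x ∈ C, Q.tgt x.1 = γ ∧ Q.projT x = R
    · exact hcT γ D hD hall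
    push_neg at hall
    obtain ⟨Pt, hPtD, hPt⟩ := hall
    obtain ⟨y, hyC', hyγ, hyproj⟩ := hwit Pt hPtD
    have hyP : y = P := by
      rcases Finset.mem_insert.mp hyC' with rfl | hy
      · rfl
      · exact absurd hyproj (hPt y (Finset.mem_of_mem_erase hy) hyγ)
    rw [hyP] at hyγ hyproj
    obtain rfl : α = γ := by rw [← hyγ, hPα]
    obtain rfl : Pt = (i, j) := by rw [← hyproj, hPproj]
    have herase : ∀ R ∈ D, R ≠ (i, j) →
        ∃ x ∈ C, x ≠ Qe ∧ Q.tgt x.1 = α ∧ Q.projT x = R := by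
      intro R hR hne
      obtain ⟨z, hz, h1, h2⟩ := hwit R hR
      rcases Finset.mem_insert.mp hz with rfl | hz'
      · exact absurd (by rw [← h2]; exact hPproj : R = (i, j)) hne
      · exact ⟨z, Finset.mem_of_mem_erase hz', Finset.ne_of_mem_erase hz', h1, h2⟩
    by_cases hrowA : ∀ R ∈ D, R ≠ (i, j) → R.1 ≠ i + 1
    · -- Case A : replace (i,j) by (i+1, j)
      have ha : ∀ R ∈ D, R ≠ (i, j) →
          (R.1 < i + 1 ∧ R.2 < j) ∨ (i + 1 < R.1 ∧ j < R.2) := by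
        intro R hR hne
        have hr := hrowA R hR hne
        have hch : (R.1 < i ∧ R.2 < j) ∨ (i < R.1 ∧ j < R.2) :=
          hD R hR (i, j) hPtD hne
        omega
      obtain ⟨hD', hcard⟩ := chain_swap (newPt := (i + 1, j)) hD hPtD ha
      have hle := hcT α _ hD' ?_
      · rw [hcard] at hle; exact hle
      intro R hR
      rcases Finset.mem_insert.mp hR with rfl | hR'
      · exact hSW
      · obtain ⟨x, hx, _, h1, h2⟩ := herase R (Finset.mem_of_mem_erase hR')
          (Finset.ne_of_mem_erase hR')
        exact ⟨x, hx, h1, h2⟩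
    · -- Case B : some other point in row i+1; replace (i,j) by (i, j+(w-1))
      push_neg at hrowA
      obtain ⟨R0, hR0D, hR0ne, hR0row⟩ := hrowA
      have hch0 : (R0.1 < i ∧ R0.2 < j) ∨ (i < R0.1 ∧ j < R0.2) :=
        hD R0 hR0D (i, j) hPtD hR0ne
      have hR0SE : j < R0.2 := by omega
      have hR0col : j + (w - 1) < R0.2 := by
        by_contra hle
        push_neg at hle
        obtain ⟨y, hyC2, hyα2, hyproj2⟩ := hwit R0 hR0D
        have hyne : y ≠ P := by
          intro h; subst h
          have : (i, j) = R0 := by rw [← hPproj]; exact hyproj2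
          have h1 : i = R0.1 := congrArg Prod.fst this
          omega
        have hyC : y ∈ C.erase Qe := by
          rcases Finset.mem_insert.mp hyC2 with h | h
          · exact absurd h hyne
          · exact h
        have hyCC : y ∈ C := Finset.mem_of_mem_erase hyC
        have hyL := BQData.mem_L_iff.mp (hCL hyCC)
        have hco := honly y hyCC hyα2 (by rw [hyproj2]; omega)
          (by rw [hyproj2]; omega) (by rw [hyproj2]; omega) (by rw [hyproj2]; omega)
        rcases hco with h | h | h
        · have h2 : R0.2 = j := by
            have : R0 = (i + 1, j) := by rw [← hyproj2]; exact h
            exact congrArg Prod.snd this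
          omega
        · have h1 : R0.1 = i := by
            have : R0 = (i, j + (w - 1)) := by rw [← hyproj2]; exact h
            exact congrArg Prod.fst this
          omega
        · obtain ⟨hy1, hy2⟩ : y.2.1 = i + 1 ∧ Q.colOff y.1 + y.2.2 = j + (w - 1) := by
            simpa [BQData.projT, Prod.ext_iff] using h
          obtain ⟨hk, hc⟩ := BQData.col_unique (hyα2.trans hQα.symm) hyL.2 hQeL.2
            (by omega)
          have hyQe : y = Qe := by
            have h21 : y.2.1 = Qe.2.1 := by omega
            have h2 : y.2 = Qe.2 := Prod.ext h21 hc
            exact Prod.ext hk h2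
          exact absurd hyQe (Finset.ne_of_mem_erase hyC)
      have ha : ∀ R ∈ D, R ≠ (i, j) →
          (R.1 < i ∧ R.2 < j + (w - 1)) ∨ (i < R.1 ∧ j + (w - 1) < R.2) := by
        intro R hR hne
        have hch : (R.1 < i ∧ R.2 < j) ∨ (i < R.1 ∧ j < R.2) :=
          hD R hR (i, j) hPtD hne
        rcases hch with h | h
        · left; omega
        · right
          refine ⟨h.1, ?_⟩
          by_cases hRR0 : R = R0
          · subst hRR0; exact hR0col
          · have hch2 : (R.1 < R0.1 ∧ R.2 < R0.2) ∨ (R0.1 < R.1 ∧ R0.2 < R.2) :=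
              hD R hR R0 hR0D hRR0
            omega
      obtain ⟨hD', hcard⟩ := chain_swap (newPt := (i, j + (w - 1))) hD hPtD ha
      have hle := hcT α _ hD' ?_
      · rw [hcard] at hle; exact hle
      intro R hR
      rcases Finset.mem_insert.mp hR with rfl | hR'
      · exact hNE
      · obtain ⟨x, hx, _, h1, h2⟩ := herase R (Finset.mem_of_mem_erase hR')
          (Finset.ne_of_mem_erase hR')
        exact ⟨x, hx, h1, h2⟩
  · -- source side
    intro β D hD hwit
    by_cases hall : ∀ R ∈ D, ∃ x ∈ C, Q.src x.1 = β ∧ Q.projS x = R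
    · exact hcS β D hD hall
    push_neg at hall
    obtain ⟨Pt, hPtD, hPt⟩ := hall
    obtain ⟨y, hyC', hyβ, hyproj⟩ := hwit Pt hPtD
    have hyP : y = P := by
      rcases Finset.mem_insert.mp hyC' with rfl | hy
      · rfl
      · exact absurd hyproj (hPt y (Finset.mem_of_mem_erase hy) hyβ)
    rw [hyP] at hyβ hyproj
    obtain rfl : Pt = (Q.rowOff P.1 + i, P.2.2) := by
      rw [← hyproj]; simp [BQData.projS, hPp.1]
    have herase : ∀ R ∈ D, R ≠ (Q.rowOff P.1 + i, P.2.2) →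
        ∃ x ∈ C, x ≠ Qe ∧ Q.src x.1 = β ∧ Q.projS x = R := by
      intro R hR hne
      obtain ⟨z, hz, h1, h2⟩ := hwit R hR
      rcases Finset.mem_insert.mp hz with rfl | hz'
      · refine absurd ?_ hne
        rw [← h2]; simp [BQData.projS, hPp.1]
      · exact ⟨z, Finset.mem_of_mem_erase hz', Finset.ne_of_mem_erase hz', h1, h2⟩
    obtain ⟨xSW, hxSWC, hxSWα, hxSWproj⟩ := hSW
    have hxSWL := BQData.mem_L_iff.mp (hCL hxSWC)
    obtain ⟨hsw1, hsw2⟩ : xSW.2.1 = i + 1 ∧ Q.colOff xSW.1 + xSW.2.2 = j := by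
      simpa [BQData.projT, Prod.ext_iff] using hxSWproj
    obtain ⟨hswk, hswc⟩ := BQData.col_unique (hxSWα.trans hPα.symm) hxSWL.2 hPLb.2
      (by omega)
    by_cases hrowA : ∀ R ∈ D, R ≠ (Q.rowOff P.1 + i, P.2.2) →
        R.1 ≠ Q.rowOff P.1 + i + 1
    · -- Case A : replace by (rowOff+i+1, P.2.2)
      have ha : ∀ R ∈ D, R ≠ (Q.rowOff P.1 + i, P.2.2) →
          (R.1 < Q.rowOff P.1 + i + 1 ∧ R.2 < P.2.2) ∨
          (Q.rowOff P.1 + i + 1 < R.1 ∧ P.2.2 < R.2) := by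
        intro R hR hne
        have hr := hrowA R hR hne
        have hch : (R.1 < Q.rowOff P.1 + i ∧ R.2 < P.2.2) ∨
            (Q.rowOff P.1 + i < R.1 ∧ P.2.2 < R.2) := hD R hR _ hPtD hne
        omega
      obtain ⟨hD', hcard⟩ := chain_swap (newPt := (Q.rowOff P.1 + i + 1, P.2.2))
        hD hPtD ha
      have hle := hcS β _ hD' ?_
      · rw [hcard] at hle; exact hle
      intro R hR
      rcases Finset.mem_insert.mp hR with rfl | hR'
      · refine ⟨xSW, hxSWC, by rw [hswk]; exact hyβ, ?_⟩
        have hps : Q.projS xSW = (Q.rowOff xSW.1 + xSW.2.1, xSW.2.2) := rfl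
        rw [hps, hswk, hsw1, hswc, Prod.mk.injEq]
        omega
      · obtain ⟨x, hx, _, h1, h2⟩ := herase R (Finset.mem_of_mem_erase hR')
          (Finset.ne_of_mem_erase hR')
        exact ⟨x, hx, h1, h2⟩
    · -- Case B
      push_neg at hrowA
      obtain ⟨R0, hR0D, hR0ne, hR0row⟩ := hrowA
      have hch0 : (R0.1 < Q.rowOff P.1 + i ∧ R0.2 < P.2.2) ∨
          (Q.rowOff P.1 + i < R0.1 ∧ P.2.2 < R0.2) := hD R0 hR0D _ hPtD hR0ne
      have hR0SE : P.2.2 < R0.2 := by omega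
      obtain ⟨y, hyC2, hyβ2, hyproj2⟩ := hwit R0 hR0D
      have hyne : y ≠ P := by
        intro h
        rw [h, hyproj] at hyproj2
        have h1 : Q.rowOff P.1 + i = R0.1 := congrArg Prod.fst hyproj2
        omega
      have hyC : y ∈ C.erase Qe := by
        rcases Finset.mem_insert.mp hyC2 with h | h
        · exact absurd h hyne
        · exact h
      have hyCC : y ∈ C := Finset.mem_of_mem_erase hyC
      have hyL := BQData.mem_L_iff.mp (hCL hyCC)
      obtain ⟨hy1, hy2⟩ : Q.rowOff y.1 + y.2.1 = R0.1 ∧ y.2.2 = R0.2 := by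
        simpa [BQData.projS, Prod.ext_iff] using hyproj2
      have hi1 : i + 1 < Q.mt (Q.tgt P.1) := by
        rw [hPα]
        have h2 := hrect.1
        simp only [BQData.aT] at h2
        omega
      obtain ⟨hyk, hyrow⟩ := BQData.row_unique (hyβ2.trans hyβ.symm) hyL.1 hi1
        (by omega)
      have hytgt : Q.tgt y.1 = α := by rw [hyk, hPα]
      have hprojTy : Q.projT y = (i + 1, Q.colOff P.1 + y.2.2) := by
        simp [BQData.projT, hyk, hyrow]
      have hycol : j + (w - 1) < Q.colOff P.1 + y.2.2 := by
        by_contra hle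
        push_neg at hle
        have hco := honly y hyCC hytgt
          (by rw [hprojTy]; show i ≤ i + 1; omega)
          (by rw [hprojTy])
          (by rw [hprojTy]; show j ≤ Q.colOff P.1 + y.2.2; omega)
          (by rw [hprojTy]; show Q.colOff P.1 + y.2.2 ≤ j + (w - 1); omega)
        rcases hco with h | h | h
        · rw [hprojTy] at h
          have h2 : Q.colOff P.1 + y.2.2 = j := congrArg Prod.snd h
          omega
        · rw [hprojTy] at h
          have h1 : i + 1 = i := congrArg Prod.fst h
          omega
        · rw [hprojTy] at h
          have h2 : Q.colOff P.1 + y.2.2 = j + (w - 1) := congrArg Prod.snd h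
          obtain ⟨hk, hc⟩ := BQData.col_unique (hytgt.trans hQα.symm) hyL.2 hQeL.2
            (by rw [hyk]; omega)
          have hyQe : y = Qe := by
            have h21 : y.2.1 = Qe.2.1 := by omega
            exact Prod.ext hk (Prod.ext h21 hc)
          exact absurd hyQe (Finset.ne_of_mem_erase hyC)
      have hyub : y.2.2 < Q.ms (Q.src P.1) := by rw [← hyk]; exact hyL.2
      have hy22 : P.2.2 + w ≤ y.2.2 := by omega
      obtain ⟨xNE, hxNEC, hxNEα, hxNEproj⟩ := hNE
      have hxNEL := BQData.mem_L_iff.mp (hCL hxNEC)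
      obtain ⟨hne1, hne2⟩ : xNE.2.1 = i ∧ Q.colOff xNE.1 + xNE.2.2 = j + (w - 1) := by
        simpa [BQData.projT, Prod.ext_iff] using hxNEproj
      obtain ⟨hnek, hnec⟩ := BQData.col_unique (hxNEα.trans hPα.symm) hxNEL.2
        (show P.2.2 + (w - 1) < Q.ms (Q.src P.1) by omega) (by omega)
      have ha : ∀ R ∈ D, R ≠ (Q.rowOff P.1 + i, P.2.2) →
          (R.1 < Q.rowOff P.1 + i ∧ R.2 < P.2.2 + (w - 1)) ∨
          (Q.rowOff P.1 + i < R.1 ∧ P.2.2 + (w - 1) < R.2) := by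
        intro R hR hne
        have hch : (R.1 < Q.rowOff P.1 + i ∧ R.2 < P.2.2) ∨
            (Q.rowOff P.1 + i < R.1 ∧ P.2.2 < R.2) := hD R hR _ hPtD hne
        rcases hch with h | h
        · left; omega
        · right
          refine ⟨h.1, ?_⟩
          by_cases hRR0 : R = R0
          · subst hRR0; omega
          · have hch2 : (R.1 < R0.1 ∧ R.2 < R0.2) ∨ (R0.1 < R.1 ∧ R0.2 < R.2) :=
              hD R hR R0 hR0D hRR0
            omega
      obtain ⟨hD', hcard⟩ := chain_swap (newPt := (Q.rowOff P.1 + i, P.2.2 + (w - 1)))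
        hD hPtD ha
      have hle := hcS β _ hD' ?_
      · rw [hcard] at hle; exact hle
      intro R hR
      rcases Finset.mem_insert.mp hR with rfl | hR'
      · refine ⟨xNE, hxNEC, by rw [hnek]; exact hyβ, ?_⟩
        have hps : Q.projS xNE = (Q.rowOff xNE.1 + xNE.2.1, xNE.2.2) := rfl
        rw [hps, hnek, hne1, hnec]
      · obtain ⟨x, hx, _, h1, h2⟩ := herase R (Finset.mem_of_mem_erase hR')
          (Finset.ne_of_mem_erase hR')
        exact ⟨x, hx, h1, h2⟩
end

section
/- All maximal subsets of the grid [1,m]×[1,n] containing no diagonal chain of size u+1 (for 0 < u ≤ min(m,n)) have the same cardinality, equal to u(m+n-u). -/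
open Finset
open scoped Pointwise

namespace IsDiagChain

theorem mono_s10 {D D' : Finset (ℤ × ℤ)} (hD : IsDiagChain D) (h : D' ⊆ D) : IsDiagChain D' :=
  fun P hP Q hQ hne => hD P (h hP) Q (h hQ) hne

theorem neg {D : Finset (ℤ × ℤ)} (hD : IsDiagChain D) : IsDiagChain (-D) := by
  intro P hP Q hQ hne
  rw [mem_neg'] at hP hQ
  have := hD (-P) hP (-Q) hQ (neg_injective.ne hne)
  simp only [Prod.fst_neg, Prod.snd_neg, neg_lt_neg_iff] at this
  tauto

theorem union {A B : Finset (ℤ × ℤ)} (hA : IsDiagChain A) (hB : IsDiagChain B)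
    (hAB : ∀ P ∈ A, ∀ Q ∈ B, P.1 < Q.1 ∧ P.2 < Q.2) : IsDiagChain (A ∪ B) := by
  intro P hP Q hQ hne
  rcases mem_union.1 hP with hP | hP <;> rcases mem_union.1 hQ with hQ | hQ
  · exact hA P hP Q hQ hne
  · exact Or.inl (hAB P hP Q hQ)
  · exact Or.inr (hAB Q hQ P hP)
  · exact hB P hP Q hQ hne

end IsDiagChain

open Classical in
noncomputable def chainHeight (S : Finset (ℤ × ℤ)) : ℕ :=
  (S.powerset.filter IsDiagChain).sup card

theorem card_le_chainHeight {S D : Finset (ℤ × ℤ)} (hDS : D ⊆ S) (hD : IsDiagChain D) :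
    D.card ≤ chainHeight S := by
  classical
  exact le_sup (f := card) (mem_filter.2 ⟨mem_powerset.2 hDS, hD⟩)

theorem exists_card_eq_chainHeight (S : Finset (ℤ × ℤ)) :
    ∃ D ⊆ S, IsDiagChain D ∧ D.card = chainHeight S := by
  classical
  have hempty : ∅ ∈ S.powerset.filter IsDiagChain :=
    mem_filter.2 ⟨empty_mem_powerset S, fun _ h => absurd h (notMem_empty _)⟩
  obtain ⟨D, hD, hsup⟩ := exists_mem_eq_sup _ ⟨∅, hempty⟩ card
  rw [mem_filter, mem_powerset] at hD
  exact ⟨D, hD.1, hD.2, hsup.symm⟩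

theorem chainHeight_empty : chainHeight ∅ = 0 := by
  obtain ⟨D, hD, -, hcard⟩ := exists_card_eq_chainHeight ∅
  rw [← hcard, subset_empty.1 hD, card_empty]

theorem chainHeight_neg_le (S : Finset (ℤ × ℤ)) : chainHeight (-S) ≤ chainHeight S := by
  obtain ⟨D, hD, hDc, hcard⟩ := exists_card_eq_chainHeight (-S)
  rw [← hcard, ← card_neg D]
  exact card_le_chainHeight (by simpa using neg_subset_neg hD) hDc.neg

theorem chainHeight_neg (S : Finset (ℤ × ℤ)) : chainHeight (-S) = chainHeight S :=
  le_antisymm (chainHeight_neg_le S) (by simpa using chainHeight_neg_le (-S))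

theorem card_le_chainHeight_add_chainHeight {D S T : Finset (ℤ × ℤ)} (hD : IsDiagChain D)
    (hDST : D ⊆ S ∪ T) : D.card ≤ chainHeight S + chainHeight T :=
  calc D.card = (D ∩ S ∪ D ∩ T).card := by rw [← inter_union_distrib_left, inter_eq_left.2 hDST]
    _ ≤ (D ∩ S).card + (D ∩ T).card := card_union_le _ _
    _ ≤ chainHeight S + chainHeight T :=
      add_le_add (card_le_chainHeight inter_subset_right (hD.mono_s10 inter_subset_left))
        (card_le_chainHeight inter_subset_right (hD.mono_s10 inter_subset_left))

def strictlyBelow (C : Finset (ℤ × ℤ)) (P : ℤ × ℤ) : Finset (ℤ × ℤ) :=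
  C.filter fun Q => Q.1 < P.1 ∧ Q.2 < P.2

def strictlyAbove (C : Finset (ℤ × ℤ)) (P : ℤ × ℤ) : Finset (ℤ × ℤ) :=
  C.filter fun Q => P.1 < Q.1 ∧ P.2 < Q.2

theorem mem_strictlyBelow {C : Finset (ℤ × ℤ)} {P Q : ℤ × ℤ} :
    Q ∈ strictlyBelow C P ↔ Q ∈ C ∧ Q.1 < P.1 ∧ Q.2 < P.2 :=
  mem_filter

theorem mem_strictlyAbove {C : Finset (ℤ × ℤ)} {P Q : ℤ × ℤ} :
    Q ∈ strictlyAbove C P ↔ Q ∈ C ∧ P.1 < Q.1 ∧ P.2 < Q.2 :=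
  mem_filter

theorem strictlyBelow_neg (C : Finset (ℤ × ℤ)) (P : ℤ × ℤ) :
    strictlyBelow (-C) P = -strictlyAbove C (-P) := by
  ext Q
  simp only [mem_strictlyBelow, mem_strictlyAbove, mem_neg', Prod.fst_neg, Prod.snd_neg,
    neg_lt_neg_iff]

theorem strictlyAbove_neg (C : Finset (ℤ × ℤ)) (P : ℤ × ℤ) :
    strictlyAbove (-C) P = -strictlyBelow C (-P) := by
  ext Q
  simp only [mem_strictlyBelow, mem_strictlyAbove, mem_neg', Prod.fst_neg, Prod.snd_neg,
    neg_lt_neg_iff]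

theorem chainHeight_strictlyBelow_succ_le (C : Finset (ℤ × ℤ)) (P : ℤ × ℤ) :
    chainHeight (strictlyBelow C (P.1 + 1, P.2 + 1)) ≤ chainHeight (strictlyBelow C P) + 1 := by
  obtain ⟨D, hDS, hD, hcard⟩ := exists_card_eq_chainHeight (strictlyBelow C (P.1 + 1, P.2 + 1))
  -- The points weakly but not strictly below `P` lie on two rays from `P`, which carry no
  -- two comparable points.
  have hcorner : (D \ strictlyBelow C P).card ≤ 1 := by
    refine card_le_one.2 fun a ha b hb => by_contra fun hne => ?_
    obtain ⟨haD, ha'⟩ := mem_sdiff.1 ha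
    obtain ⟨hbD, hb'⟩ := mem_sdiff.1 hb
    obtain ⟨haC, ha₁⟩ := mem_strictlyBelow.1 (hDS haD)
    obtain ⟨hbC, hb₁⟩ := mem_strictlyBelow.1 (hDS hbD)
    simp only [mem_strictlyBelow, haC, hbC, true_and] at ha' hb' ha₁ hb₁
    rcases hD a haD b hbD hne with h | h <;> omega
  calc chainHeight (strictlyBelow C (P.1 + 1, P.2 + 1))
      = (D \ strictlyBelow C P).card + (D ∩ strictlyBelow C P).card := by
        rw [card_sdiff_add_card_inter, hcard]
    _ ≤ 1 + chainHeight (strictlyBelow C P) :=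
      add_le_add hcorner (card_le_chainHeight inter_subset_right (hD.mono_s10 inter_subset_left))
    _ = chainHeight (strictlyBelow C P) + 1 := add_comm _ _

def diagonal (S : Finset (ℤ × ℤ)) (d : ℤ) : Finset (ℤ × ℤ) :=
  S.filter fun Q => Q.1 - Q.2 = d

theorem mem_diagonal {S : Finset (ℤ × ℤ)} {d : ℤ} {Q : ℤ × ℤ} :
    Q ∈ diagonal S d ↔ Q ∈ S ∧ Q.1 - Q.2 = d :=
  mem_filter

theorem isDiagChain_diagonal (S : Finset (ℤ × ℤ)) (d : ℤ) : IsDiagChain (diagonal S d) := by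
  intro P hP Q hQ hne
  have hP := (mem_diagonal.1 hP).2
  have hQ := (mem_diagonal.1 hQ).2
  have : P.1 ≠ Q.1 := fun h => hne (Prod.ext h (by omega))
  omega

theorem diagonal_neg (S : Finset (ℤ × ℤ)) (d : ℤ) : diagonal (-S) (-d) = -diagonal S d := by
  ext Q
  simp only [mem_diagonal, mem_neg', Prod.fst_neg, Prod.snd_neg]
  exact and_congr_right fun _ => by omega

theorem card_strictlyBelow_diagonal_add_le (C : Finset (ℤ × ℤ)) (P : ℤ × ℤ) :
    (strictlyBelow (diagonal C (P.1 - P.2)) P).card + (if P ∈ C then 1 else 0) ≤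
      (strictlyBelow (diagonal C (P.1 - P.2)) (P.1 + 1, P.2 + 1)).card := by
  have hmono : strictlyBelow (diagonal C (P.1 - P.2)) P ⊆
      strictlyBelow (diagonal C (P.1 - P.2)) (P.1 + 1, P.2 + 1) :=
    fun Q hQ => by
      obtain ⟨hQ, h₁, h₂⟩ := mem_strictlyBelow.1 hQ
      exact mem_strictlyBelow.2 ⟨hQ, by omega, by omega⟩
  split_ifs with hPC
  · have hP : P ∈ strictlyBelow (diagonal C (P.1 - P.2)) (P.1 + 1, P.2 + 1) :=
      mem_strictlyBelow.2 ⟨mem_diagonal.2 ⟨hPC, rfl⟩, by omega, by omega⟩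
    rw [← card_insert_of_notMem fun h => (mem_strictlyBelow.1 h).2.1.false]
    exact card_le_card (insert_subset hP hmono)
  · exact card_le_card hmono

section Saturation

variable {u : ℕ} {C : Finset (ℤ × ℤ)}

theorem chainHeight_strictlyBelow_succ_add_chainHeight_strictlyAbove_le
    (hchain : ∀ D ⊆ C, IsDiagChain D → D.card ≤ u) (P : ℤ × ℤ) :
    chainHeight (strictlyBelow C (P.1 + 1, P.2 + 1)) + chainHeight (strictlyAbove C P) ≤ u := by
  obtain ⟨A, hAS, hA, hAcard⟩ := exists_card_eq_chainHeight (strictlyBelow C (P.1 + 1, P.2 + 1))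
  obtain ⟨B, hBS, hB, hBcard⟩ := exists_card_eq_chainHeight (strictlyAbove C P)
  have hAB : ∀ a ∈ A, ∀ b ∈ B, a.1 < b.1 ∧ a.2 < b.2 := by
    intro a ha b hb
    have := (mem_strictlyBelow.1 (hAS ha)).2
    have := (mem_strictlyAbove.1 (hBS hb)).2
    omega
  have hdisj : Disjoint A B := disjoint_left.2 fun a ha hb => (hAB a ha a hb).1.false
  rw [← hAcard, ← hBcard, ← card_union_of_disjoint hdisj]
  exact hchain _ (union_subset (hAS.trans (filter_subset _ _)) (hBS.trans (filter_subset _ _)))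
    (hA.union hB hAB)

theorem le_chainHeight_strictlyBelow_add_chainHeight_strictlyAbove
    (hchain : ∀ D ⊆ C, IsDiagChain D → D.card ≤ u) {P : ℤ × ℤ}
    {D : Finset (ℤ × ℤ)} (hDP : D ⊆ insert P C) (hD : IsDiagChain D) (hcard : D.card = u + 1) :
    u ≤ chainHeight (strictlyBelow C P) + chainHeight (strictlyAbove C P) := by
  have hPD : P ∈ D := by
    by_contra hPD
    have hDC : D ⊆ C := fun Q hQ =>
      (mem_insert.1 (hDP hQ)).resolve_left (ne_of_mem_of_not_mem hQ hPD)
    have := hchain D hDC hD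
    omega
  have hsplit : D.erase P ⊆ strictlyBelow C P ∪ strictlyAbove C P := by
    intro Q hQ
    obtain ⟨hQP, hQD⟩ := mem_erase.1 hQ
    have hQC : Q ∈ C := (mem_insert.1 (hDP hQD)).resolve_left hQP
    rcases hD Q hQD P hPD hQP with h | h
    · exact mem_union_left _ (mem_strictlyBelow.2 ⟨hQC, h⟩)
    · exact mem_union_right _ (mem_strictlyAbove.2 ⟨hQC, h⟩)
  have := card_le_chainHeight_add_chainHeight (hD.mono_s10 (erase_subset P D)) hsplit
  rwa [card_erase_of_mem hPD, hcard] at this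

theorem chainHeight_strictlyBelow_le_card_diagonal
    (hchain : ∀ D ⊆ C, IsDiagChain D → D.card ≤ u) {c : ℤ × ℤ}
    (hc : ∀ Q ∈ C, c.1 ≤ Q.1 ∧ c.2 ≤ Q.2) (P : ℤ × ℤ)
    (hsat : ∀ Q : ℤ × ℤ, c.1 ≤ Q.1 → c.2 ≤ Q.2 → Q.1 < P.1 → Q.2 < P.2 → Q ∉ C →
      u ≤ chainHeight (strictlyBelow C Q) + chainHeight (strictlyAbove C Q)) :
    chainHeight (strictlyBelow C P) ≤ (strictlyBelow (diagonal C (P.1 - P.2)) P).card := by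
  by_cases hP : P.1 ≤ c.1 ∨ P.2 ≤ c.2
  · have : strictlyBelow C P = ∅ :=
      filter_eq_empty_iff.2 fun Q hQ => by have := hc Q hQ; omega
    rw [this, chainHeight_empty]
    exact Nat.zero_le _
  obtain ⟨Q, hQ₁, hQ₂⟩ : ∃ Q : ℤ × ℤ, Q.1 = P.1 - 1 ∧ Q.2 = P.2 - 1 :=
    ⟨(P.1 - 1, P.2 - 1), rfl, rfl⟩
  have hPQ : P = (Q.1 + 1, Q.2 + 1) := Prod.ext (by simp [hQ₁]) (by simp [hQ₂])
  have hd : P.1 - P.2 = Q.1 - Q.2 := by omega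
  have ih := chainHeight_strictlyBelow_le_card_diagonal hchain hc Q
    fun R h₁ h₂ h₃ h₄ => hsat R h₁ h₂ (by omega) (by omega)
  have hstep := card_strictlyBelow_diagonal_add_le C Q
  rw [hd, hPQ]
  by_cases hQC : Q ∈ C
  · have := chainHeight_strictlyBelow_succ_le C Q
    simp only [hQC, if_true] at hstep
    omega
  · have := chainHeight_strictlyBelow_succ_add_chainHeight_strictlyAbove_le hchain Q
    have := hsat Q (by omega) (by omega) (by omega) (by omega) hQC
    omega
termination_by (P.1 - c.1).toNat
decreasing_by omega

theorem chainHeight_strictlyAbove_le_card_diagonal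
    (hchain : ∀ D ⊆ C, IsDiagChain D → D.card ≤ u) {c : ℤ × ℤ}
    (hc : ∀ Q ∈ C, Q.1 ≤ c.1 ∧ Q.2 ≤ c.2) (P : ℤ × ℤ)
    (hsat : ∀ Q : ℤ × ℤ, Q.1 ≤ c.1 → Q.2 ≤ c.2 → P.1 < Q.1 → P.2 < Q.2 → Q ∉ C →
      u ≤ chainHeight (strictlyBelow C Q) + chainHeight (strictlyAbove C Q)) :
    chainHeight (strictlyAbove C P) ≤ (strictlyAbove (diagonal C (P.1 - P.2)) P).card := by
  have hchain' : ∀ D ⊆ -C, IsDiagChain D → D.card ≤ u := fun D hD hDc => by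
    simpa using hchain (-D) (by simpa using neg_subset_neg hD) hDc.neg
  have hc' : ∀ Q ∈ -C, (-c).1 ≤ Q.1 ∧ (-c).2 ≤ Q.2 := fun Q hQ => by
    have := hc (-Q) (mem_neg'.1 hQ)
    simp only [Prod.fst_neg, Prod.snd_neg] at this ⊢
    omega
  have hsat' : ∀ Q : ℤ × ℤ, (-c).1 ≤ Q.1 → (-c).2 ≤ Q.2 → Q.1 < (-P).1 → Q.2 < (-P).2 →
      Q ∉ -C → u ≤ chainHeight (strictlyBelow (-C) Q) + chainHeight (strictlyAbove (-C) Q) := by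
    intro Q h₁ h₂ h₃ h₄ hQ
    simp only [Prod.fst_neg, Prod.snd_neg] at h₁ h₂ h₃ h₄
    rw [strictlyBelow_neg, strictlyAbove_neg, chainHeight_neg, chainHeight_neg, add_comm]
    exact hsat (-Q) (by simp; omega) (by simp; omega) (by simp; omega) (by simp; omega)
      (fun h => hQ (mem_neg'.2 h))
  have := chainHeight_strictlyBelow_le_card_diagonal hchain' hc' (-P) hsat'
  rwa [strictlyBelow_neg, neg_neg, chainHeight_neg, Prod.fst_neg, Prod.snd_neg, neg_sub_neg,
    ← neg_sub, diagonal_neg, strictlyBelow_neg, neg_neg, card_neg] at this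

end Saturation

noncomputable def grid (m n : ℕ) : Finset (ℤ × ℤ) :=
  Icc 1 (m : ℤ) ×ˢ Icc 1 (n : ℤ)

theorem mem_grid {m n : ℕ} {P : ℤ × ℤ} :
    P ∈ grid m n ↔ 1 ≤ P.1 ∧ P.1 ≤ m ∧ 1 ≤ P.2 ∧ P.2 ≤ n := by
  simp only [grid, mem_product, mem_Icc, and_assoc]

theorem card_grid (m n : ℕ) : (grid m n).card = m * n := by
  simp [grid]

theorem card_diagonal_grid (m n : ℕ) (d : ℤ) :
    (diagonal (grid m n) d).card = (min (n : ℤ) (m - d) + 1 - max 1 (1 - d)).toNat := by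
  have : diagonal (grid m n) d =
      (Icc (max 1 (1 - d)) (min (n : ℤ) (m - d))).image fun y => (y + d, y) := by
    ext ⟨x, y⟩
    simp only [mem_diagonal, mem_grid, mem_image, mem_Icc, Prod.mk.injEq]
    constructor
    · rintro ⟨h, rfl⟩
      exact ⟨y, by omega, by omega, rfl⟩
    · rintro ⟨z, hz, rfl, rfl⟩
      omega
  rw [this, card_image_of_injective _ fun a b h => (Prod.mk.inj h).2, Int.card_Icc]

section Grid

variable {m n u : ℕ} {C : Finset (ℤ × ℤ)}

theorem card_diagonal_eq_min (hC : C ⊆ grid m n)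
    (hchain : ∀ D ⊆ C, IsDiagChain D → D.card ≤ u)
    (hmax : ∀ P ∈ grid m n, P ∉ C → ∃ D ⊆ insert P C, IsDiagChain D ∧ D.card = u + 1) (d : ℤ) :
    (diagonal C d).card = min u (diagonal (grid m n) d).card := by
  have hle : (diagonal C d).card ≤ u := hchain _ (filter_subset _ _) (isDiagChain_diagonal C d)
  have hsub : diagonal C d ⊆ diagonal (grid m n) d := filter_subset_filter _ hC
  by_cases hfull : diagonal (grid m n) d ⊆ C
  · have heq : diagonal C d = diagonal (grid m n) d :=
      hsub.antisymm fun Q hQ => mem_diagonal.2 ⟨hfull hQ, (mem_diagonal.1 hQ).2⟩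
    rw [← heq]
    omega
  obtain ⟨w, hw, hwC⟩ := not_subset.1 hfull
  obtain ⟨hwg, rfl⟩ := mem_diagonal.1 hw
  have hsat : ∀ Q ∈ grid m n, Q ∉ C →
      u ≤ chainHeight (strictlyBelow C Q) + chainHeight (strictlyAbove C Q) := by
    intro Q hQ hQC
    obtain ⟨D, hD, hDc, hcard⟩ := hmax Q hQ hQC
    exact le_chainHeight_strictlyBelow_add_chainHeight_strictlyAbove hchain hD hDc hcard
  have hwg' := mem_grid.1 hwg
  have hbelow := chainHeight_strictlyBelow_le_card_diagonal hchain (c := (1, 1))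
    (fun Q hQ => by have := mem_grid.1 (hC hQ); exact ⟨this.1, this.2.2.1⟩) w
    fun Q h₁ h₂ h₃ h₄ => hsat Q (mem_grid.2 ⟨h₁, by omega, h₂, by omega⟩)
  have habove := chainHeight_strictlyAbove_le_card_diagonal hchain (c := ((m : ℤ), (n : ℤ)))
    (fun Q hQ => by have := mem_grid.1 (hC hQ); exact ⟨this.2.1, this.2.2.2⟩) w
    fun Q h₁ h₂ h₃ h₄ => hsat Q (mem_grid.2 ⟨by omega, h₁, by omega, h₂⟩)
  have hdisj : Disjoint (strictlyBelow (diagonal C (w.1 - w.2)) w)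
      (strictlyAbove (diagonal C (w.1 - w.2)) w) :=
    disjoint_filter.2 fun Q _ h h' => lt_asymm h.1 h'.1
  have hsplit := card_le_card (union_subset (filter_subset _ _) (filter_subset _ _) :
    strictlyBelow (diagonal C (w.1 - w.2)) w ∪ strictlyAbove (diagonal C (w.1 - w.2)) w ⊆
      diagonal C (w.1 - w.2))
  rw [card_union_of_disjoint hdisj] at hsplit
  have := card_le_card hsub
  have := hsat w hwg hwC
  omega

theorem card_add_card_grid_sub (hC : C ⊆ grid m n)
    (hchain : ∀ D ⊆ C, IsDiagChain D → D.card ≤ u)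
    (hmax : ∀ P ∈ grid m n, P ∉ C → ∃ D ⊆ insert P C, IsDiagChain D ∧ D.card = u + 1) :
    C.card + (grid (m - u) (n - u)).card = (grid m n).card := by
  have hfiber : ∀ S ⊆ grid m n,
      S.card = ∑ d ∈ (grid m n).image (fun Q => Q.1 - Q.2), (diagonal S d).card :=
    fun S hS => card_eq_sum_card_fiberwise fun Q hQ => mem_image_of_mem _ (hS hQ)
  have hsmall : grid (m - u) (n - u) ⊆ grid m n := fun Q hQ => by
    rw [mem_grid] at hQ ⊢
    omega
  rw [hfiber C hC, hfiber _ hsmall, hfiber _ subset_rfl, ← sum_add_distrib]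
  refine sum_congr rfl fun d _ => ?_
  rw [card_diagonal_eq_min hC hchain hmax, card_diagonal_grid, card_diagonal_grid]
  omega

end Grid

theorem stmt10_general (m n u : ℕ) (hum : u ≤ m) (hun : u ≤ n)
    (C : Finset (ℤ × ℤ))
    (hC : ∀ P ∈ C, 1 ≤ P.1 ∧ P.1 ≤ (m : ℤ) ∧ 1 ≤ P.2 ∧ P.2 ≤ (n : ℤ))
    (hchain : ∀ D : Finset (ℤ × ℤ), D ⊆ C → IsDiagChain D → D.card ≤ u)
    (hmax : ∀ P : ℤ × ℤ, 1 ≤ P.1 → P.1 ≤ (m : ℤ) → 1 ≤ P.2 → P.2 ≤ (n : ℤ) → P ∉ C →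
      ∃ D : Finset (ℤ × ℤ), D ⊆ insert P C ∧ IsDiagChain D ∧ D.card = u + 1) :
    C.card = u * (m + n - u) := by
  have hcount := card_add_card_grid_sub (fun P hP => mem_grid.2 (hC P hP)) hchain
    fun P hP => by
      obtain ⟨h₁, h₂, h₃, h₄⟩ := mem_grid.1 hP
      exact hmax P h₁ h₂ h₃ h₄
  rw [card_grid, card_grid] at hcount
  obtain ⟨a, rfl⟩ := Nat.exists_eq_add_of_le hum
  obtain ⟨b, rfl⟩ := Nat.exists_eq_add_of_le hun
  rw [show u + a + (u + b) - u = u + a + b by omega]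
  simp only [Nat.add_sub_cancel_left] at hcount
  linarith

/-- Every maximal subset of the grid [1,m]×[1,n] containing no diagonal chain of size u+1
has cardinality u(m+n-u). -/
theorem stmt10 (m n u : ℕ) (hu : 0 < u) (hum : u ≤ m) (hun : u ≤ n)
    (C : Finset (ℤ × ℤ))
    (hC : ∀ P ∈ C, 1 ≤ P.1 ∧ P.1 ≤ (m : ℤ) ∧ 1 ≤ P.2 ∧ P.2 ≤ (n : ℤ))
    (hchain : ∀ D : Finset (ℤ × ℤ), D ⊆ C → IsDiagChain D → D.card ≤ u)
    (hmax : ∀ P : ℤ × ℤ, 1 ≤ P.1 → P.1 ≤ (m : ℤ) → 1 ≤ P.2 → P.2 ≤ (n : ℤ) → P ∉ C →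
      ∃ D : Finset (ℤ × ℤ), D ⊆ insert P C ∧ IsDiagChain D ∧ D.card = u + 1) :
    C.card = u * (m + n - u) :=
  stmt10_general m n u hum hun C hC hchain hmax
end

section
/- Let C be a maximal u-compatible subset of L. A point (i,j,k) ∈ L belongs to C if and only if r_{ijk} + s_{ijk} < u_{t(h_k)} and r'_{ijk} + s'_{ijk} < u_{s(h_k)}, where r_{ijk} (resp. s_{ijk}) is the maximal size of a diagonal chain of C^{t(h_k)} lying strictly NW (resp. strictly SE) of the image of (i,j,k) in A_{t(h_k)}, and r'_{ijk}, s'_{ijk} are defined analogously in A_{s(h_k)}. -/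
lemma DiagChainN_subset {D E : Finset (ℕ × ℕ)} (h : DiagChainN E) (hs : D ⊆ E) :
    DiagChainN D := fun P hP Q hQ hne => h P (hs hP) Q (hs hQ) hne

/-- Forward direction, abstracted: if a point p is in the block projection and
two chains lie strictly NW/SE of it, their total size is < u. -/
lemma chain_split (W : ℕ × ℕ → Prop) (u : ℕ) (p : ℕ × ℕ)
    (hb : ∀ D : Finset (ℕ × ℕ), DiagChainN D → (∀ P ∈ D, W P) → D.card ≤ u) (hp : W p)
    (D₁ D₂ : Finset (ℕ × ℕ)) (h1 : DiagChainN D₁) (h2 : DiagChainN D₂)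
    (hd1 : ∀ P ∈ D₁, W P ∧ P.1 < p.1 ∧ P.2 < p.2)
    (hd2 : ∀ P ∈ D₂, W P ∧ p.1 < P.1 ∧ p.2 < P.2) :
    D₁.card + D₂.card < u := by
  set E : Finset (ℕ × ℕ) := insert p (D₁ ∪ D₂) with hE
  have hmem : ∀ P ∈ E, P = p ∨ P ∈ D₁ ∨ P ∈ D₂ := by
    intro P hP
    simpa [hE, Finset.mem_insert, Finset.mem_union] using hP
  have hchain : DiagChainN E := by
    intro P hP Q hQ hne
    rcases hmem P hP with rfl | hP1 | hP2
    · rcases hmem Q hQ with rfl | hQ1 | hQ2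
      · exact absurd rfl hne
      · exact Or.inr (hd1 Q hQ1).2
      · exact Or.inl (hd2 Q hQ2).2
    · rcases hmem Q hQ with rfl | hQ1 | hQ2
      · exact Or.inl (hd1 P hP1).2
      · exact h1 P hP1 Q hQ1 hne
      · obtain ⟨-, hp1, hp2⟩ := hd1 P hP1
        obtain ⟨-, hq1, hq2⟩ := hd2 Q hQ2
        exact Or.inl ⟨hp1.trans hq1, hp2.trans hq2⟩
    · rcases hmem Q hQ with rfl | hQ1 | hQ2
      · exact Or.inr (hd2 P hP2).2
      · obtain ⟨-, hp1, hp2⟩ := hd2 P hP2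
        obtain ⟨-, hq1, hq2⟩ := hd1 Q hQ1
        exact Or.inr ⟨hq1.trans hp1, hq2.trans hp2⟩
      · exact h2 P hP2 Q hQ2 hne
  have hW : ∀ P ∈ E, W P := by
    intro P hP
    rcases hmem P hP with rfl | hP1 | hP2
    · exact hp
    · exact (hd1 P hP1).1
    · exact (hd2 P hP2).1
  have hcard : E.card = D₁.card + D₂.card + 1 := by
    have hpd : p ∉ D₁ ∪ D₂ := by
      intro h
      rcases Finset.mem_union.mp h with h | h
      · exact absurd (hd1 p h).2.1 (lt_irrefl _)
      · exact absurd (hd2 p h).2.1 (lt_irrefl _)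
    have hdisj : Disjoint D₁ D₂ := by
      rw [Finset.disjoint_left]
      intro a ha1 ha2
      exact absurd ((hd1 a ha1).2.1.trans (hd2 a ha2).2.1)
        (lt_irrefl _)
    rw [hE, Finset.card_insert_of_notMem hpd, Finset.card_union_of_disjoint hdisj]
  have := hb E hchain hW
  omega

/-- Backward direction, abstracted: any chain with witnesses in `W ∪ {p}` has
size ≤ u, given the split condition. -/
lemma chain_extend (W : ℕ × ℕ → Prop) (u : ℕ) (p : ℕ × ℕ)
    (hb : ∀ D : Finset (ℕ × ℕ), DiagChainN D → (∀ P ∈ D, W P) → D.card ≤ u)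
    (hcond : ∀ D₁ D₂ : Finset (ℕ × ℕ), DiagChainN D₁ → DiagChainN D₂ →
      (∀ P ∈ D₁, W P ∧ P.1 < p.1 ∧ P.2 < p.2) →
      (∀ P ∈ D₂, W P ∧ p.1 < P.1 ∧ p.2 < P.2) →
      D₁.card + D₂.card < u)
    (D : Finset (ℕ × ℕ)) (hD : DiagChainN D) (hw : ∀ P ∈ D, W P ∨ P = p) :
    D.card ≤ u := by
  by_cases hpD : p ∈ D
  · set D' := D.erase p with hD'
    set D₁ := D'.filter (fun P => P.1 < p.1) with hD₁
    set D₂ := D'.filter (fun P => ¬ P.1 < p.1) with hD₂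
    have hsub : D' ⊆ D := Finset.erase_subset _ _
    have hWD' : ∀ P ∈ D', W P := by
      intro P hP
      rcases hw P (hsub hP) with h | rfl
      · exact h
      · exact absurd rfl (Finset.ne_of_mem_erase hP)
    have hrel : ∀ P ∈ D', (P.1 < p.1 ∧ P.2 < p.2) ∨ (p.1 < P.1 ∧ p.2 < P.2) := by
      intro P hP
      exact hD P (hsub hP) p hpD (Finset.ne_of_mem_erase hP)
    have h1 : ∀ P ∈ D₁, W P ∧ P.1 < p.1 ∧ P.2 < p.2 := by
      intro P hP
      rw [hD₁, Finset.mem_filter] at hP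
      refine ⟨hWD' P hP.1, ?_⟩
      rcases hrel P hP.1 with h | h
      · exact h
      · omega
    have h2 : ∀ P ∈ D₂, W P ∧ p.1 < P.1 ∧ p.2 < P.2 := by
      intro P hP
      rw [hD₂, Finset.mem_filter] at hP
      refine ⟨hWD' P hP.1, ?_⟩
      rcases hrel P hP.1 with h | h
      · exact absurd h.1 hP.2
      · exact h
    have hc1 : DiagChainN D₁ :=
      DiagChainN_subset hD ((Finset.filter_subset _ _).trans hsub)
    have hc2 : DiagChainN D₂ :=
      DiagChainN_subset hD ((Finset.filter_subset _ _).trans hsub)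
    have hlt := hcond D₁ D₂ hc1 hc2 h1 h2
    have hsplit : D₁.card + D₂.card = D'.card := Finset.card_filter_add_card_filter_not _
    have hDc : D'.card + 1 = D.card := by
      rw [hD']
      exact Finset.card_erase_add_one hpD
    omega
  · refine hb D hD ?_
    intro P hP
    rcases hw P hP with h | rfl
    · exact h
    · exact absurd hP hpD

/-- Characterization of membership in a maximal u-compatible set: a point x ∈ L lies in C
iff every pair of diagonal chains of C^{t(k)} lying strictly NW resp. strictly SE of x
has total size < u_{t(k)}, and similarly in the source block matrix. -/
theorem stmt11 (Q : BQData)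
    (hut : ∀ α : Fin Q.nt, 0 < Q.ut α ∧ Q.ut α ≤ min (Q.aT α) (Q.bT α))
    (hus : ∀ β : Fin Q.ns, 0 < Q.us β ∧ Q.us β ≤ min (Q.aS β) (Q.bS β))
    (hvT : ∀ α : Fin Q.nt,
      Q.ut α ≤ ∑ k ∈ Finset.univ.filter (fun k => Q.tgt k = α), Q.us (Q.src k))
    (hvS : ∀ β : Fin Q.ns,
      Q.us β ≤ ∑ k ∈ Finset.univ.filter (fun k => Q.src k = β), Q.ut (Q.tgt k))
    (C : Finset Q.Entry) (hCL : C ⊆ Q.L) (hcompat : Q.Compat C)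
    (hmax : ∀ C' : Finset Q.Entry, C' ⊆ Q.L → Q.Compat C' → C ⊆ C' → C' = C)
    (x : Q.Entry) (hx : x ∈ Q.L) :
    x ∈ C ↔
      ((∀ D₁ D₂ : Finset (ℕ × ℕ), DiagChainN D₁ → DiagChainN D₂ →
          (∀ P ∈ D₁, (∃ y ∈ C, Q.tgt y.1 = Q.tgt x.1 ∧ Q.projT y = P) ∧
            P.1 < (Q.projT x).1 ∧ P.2 < (Q.projT x).2) →
          (∀ P ∈ D₂, (∃ y ∈ C, Q.tgt y.1 = Q.tgt x.1 ∧ Q.projT y = P) ∧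
            (Q.projT x).1 < P.1 ∧ (Q.projT x).2 < P.2) →
          D₁.card + D₂.card < Q.ut (Q.tgt x.1)) ∧
       (∀ D₁ D₂ : Finset (ℕ × ℕ), DiagChainN D₁ → DiagChainN D₂ →
          (∀ P ∈ D₁, (∃ y ∈ C, Q.src y.1 = Q.src x.1 ∧ Q.projS y = P) ∧
            P.1 < (Q.projS x).1 ∧ P.2 < (Q.projS x).2) →
          (∀ P ∈ D₂, (∃ y ∈ C, Q.src y.1 = Q.src x.1 ∧ Q.projS y = P) ∧
            (Q.projS x).1 < P.1 ∧ (Q.projS x).2 < P.2) →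
          D₁.card + D₂.card < Q.us (Q.src x.1))) := by
  constructor
  · intro hxC
    constructor
    · intro D₁ D₂ h1 h2 hd1 hd2
      exact chain_split (fun P => ∃ y ∈ C, Q.tgt y.1 = Q.tgt x.1 ∧ Q.projT y = P)
        (Q.ut (Q.tgt x.1)) (Q.projT x)
        (fun D hD hW => hcompat.1 (Q.tgt x.1) D hD hW)
        ⟨x, hxC, rfl, rfl⟩ D₁ D₂ h1 h2 hd1 hd2
    · intro D₁ D₂ h1 h2 hd1 hd2
      exact chain_split (fun P => ∃ y ∈ C, Q.src y.1 = Q.src x.1 ∧ Q.projS y = P)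
        (Q.us (Q.src x.1)) (Q.projS x)
        (fun D hD hW => hcompat.2 (Q.src x.1) D hD hW)
        ⟨x, hxC, rfl, rfl⟩ D₁ D₂ h1 h2 hd1 hd2
  · rintro ⟨hT, hS⟩
    set C' : Finset Q.Entry := insert x C with hC'
    have hC'L : C' ⊆ Q.L := Finset.insert_subset hx hCL
    have hC'compat : Q.Compat C' := by
      constructor
      · intro α D hD hW
        by_cases hα : Q.tgt x.1 = α
        · subst hα
          refine chain_extend (fun P => ∃ y ∈ C, Q.tgt y.1 = Q.tgt x.1 ∧ Q.projT y = P)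
            (Q.ut (Q.tgt x.1)) (Q.projT x)
            (fun D hD hW => hcompat.1 (Q.tgt x.1) D hD hW) hT D hD ?_
          intro P hP
          obtain ⟨y, hy, hty, hpy⟩ := hW P hP
          rcases Finset.mem_insert.mp hy with rfl | hyC
          · exact Or.inr hpy.symm
          · exact Or.inl ⟨y, hyC, hty, hpy⟩
        · refine hcompat.1 α D hD ?_
          intro P hP
          obtain ⟨y, hy, hty, hpy⟩ := hW P hP
          rcases Finset.mem_insert.mp hy with rfl | hyC
          · exact absurd hty hα
          · exact ⟨y, hyC, hty, hpy⟩
      · intro β D hD hW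
        by_cases hβ : Q.src x.1 = β
        · subst hβ
          refine chain_extend (fun P => ∃ y ∈ C, Q.src y.1 = Q.src x.1 ∧ Q.projS y = P)
            (Q.us (Q.src x.1)) (Q.projS x)
            (fun D hD hW => hcompat.2 (Q.src x.1) D hD hW) hS D hD ?_
          intro P hP
          obtain ⟨y, hy, hsy, hpy⟩ := hW P hP
          rcases Finset.mem_insert.mp hy with rfl | hyC
          · exact Or.inr hpy.symm
          · exact Or.inl ⟨y, hyC, hsy, hpy⟩
        · refine hcompat.2 β D hD ?_
          intro P hP
          obtain ⟨y, hy, hsy, hpy⟩ := hW P hP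
          rcases Finset.mem_insert.mp hy with rfl | hyC
          · exact absurd hsy hβ
          · exact ⟨y, hyC, hsy, hpy⟩
    have := hmax C' hC'L hC'compat (Finset.subset_insert x C)
    rw [← this]
    exact Finset.mem_insert_self x C
end

section
/- Let Δ be the simplicial complex of u-compatible subsets of L, let ℓ ≥ 0, let v_1 <_T v_2 <_T … be the points of L in increasing order, and let S ⊆ {v_1,…,v_ℓ}. Then the iterated link/deletion complex Δ_{ℓ,S} := F_{v_ℓ}···F_{v_1}Δ (where F_{v_i} = link_{v_i} if v_i ∈ S and F_{v_i} = del_{v_i} if v_i ∉ S), whenever defined, equals { C₂ ⊆ {v_{ℓ+1},…,v_{|L|}} : C₂ ∪ S is u-compatible }. -/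
namespace BQData

/-- The lexicographic total order <_T on entries. -/
def ltT (Q : BQData) (x y : Q.Entry) : Prop :=
  x.1 < y.1 ∨ (x.1 = y.1 ∧ (x.2.1 < y.2.1 ∨ (x.2.1 = y.2.1 ∧ x.2.2 < y.2.2)))

end BQData

/-- Deletion of a vertex in a simplicial complex (as a set of finite faces). -/
def delOp {X : Type*} (v : X) (Δ : Set (Finset X)) : Set (Finset X) :=
  {G ∈ Δ | v ∉ G}

/-- Link of a vertex in a simplicial complex (as a set of finite faces). -/
def linkOp {X : Type*} [DecidableEq X] (v : X) (Δ : Set (Finset X)) : Set (Finset X) :=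
  {G | G ∈ Δ ∧ v ∉ G ∧ insert v G ∈ Δ}

/-- Iterated application of link (at v i if v i ∈ S) or deletion (otherwise) at
v 0, v 1, …, v (ℓ-1). -/
def iterOp (Q : BQData) (v : ℕ → Q.Entry) (S : Finset Q.Entry) :
    ℕ → Set (Finset Q.Entry) → Set (Finset Q.Entry)
  | 0, Δ => Δ
  | n + 1, Δ => (if v n ∈ S then linkOp (v n) else delOp (v n)) (iterOp Q v S n Δ)

theorem BQData.compat_mono (Q : BQData) {C C' : Finset Q.Entry} (h : C' ⊆ C)
    (hC : Q.Compat C) : Q.Compat C' := by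
  obtain ⟨h1, h2⟩ := hC
  refine ⟨fun α D hD hP => h1 α D hD fun P hPD => ?_,
    fun β D hD hP => h2 β D hD fun P hPD => ?_⟩
  · obtain ⟨x, hx, hx2⟩ := hP P hPD; exact ⟨x, h hx, hx2⟩
  · obtain ⟨x, hx, hx2⟩ := hP P hPD; exact ⟨x, h hx, hx2⟩

theorem BQData.ltT_irrefl (Q : BQData) (x : Q.Entry) : ¬ Q.ltT x x := by
  simp [BQData.ltT]

theorem iterOp_congr (Q : BQData) (v : ℕ → Q.Entry) (S S' : Finset Q.Entry)
    (n : ℕ) (h : ∀ i, i < n → ((v i ∈ S) ↔ (v i ∈ S'))) (Δ : Set (Finset Q.Entry)) :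
    iterOp Q v S n Δ = iterOp Q v S' n Δ := by
  induction n with
  | zero => rfl
  | succ m ih =>
    simp only [iterOp]
    rw [ih (fun i hi => h i (Nat.lt_succ_of_lt hi)),
      if_congr (h m (Nat.lt_succ_self m)) rfl rfl]

theorem key_aux (Q : BQData) (v : ℕ → Q.Entry)
    (hvL : ∀ i, i < Q.L.card → v i ∈ Q.L)
    (hsurj : ∀ x ∈ Q.L, ∃ i, i < Q.L.card ∧ v i = x)
    (hsorted : ∀ i j, i < j → j < Q.L.card → Q.ltT (v i) (v j)) :
    ∀ ℓ : ℕ, ℓ ≤ Q.L.card → ∀ S : Finset Q.Entry, (∀ x ∈ S, ∃ i, i < ℓ ∧ v i = x) →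
    iterOp Q v S ℓ {G : Finset Q.Entry | G ⊆ Q.L ∧ Q.Compat G} =
      {C₂ : Finset Q.Entry |
        (∀ x ∈ C₂, ∃ i, ℓ ≤ i ∧ i < Q.L.card ∧ v i = x) ∧ Q.Compat (C₂ ∪ S)} := by
  have hvne : ∀ i j, i < j → j < Q.L.card → v i ≠ v j := by
    intro i j hij hj he
    exact Q.ltT_irrefl (v j) (he ▸ hsorted i j hij hj)
  intro ℓ
  induction ℓ with
  | zero =>
    intro _ S hS
    have hSe : S = ∅ := Finset.eq_empty_of_forall_notMem fun x hx => by
      obtain ⟨i, hi, _⟩ := hS x hx; exact Nat.not_lt_zero i hi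
    subst hSe
    ext G
    simp only [iterOp, Set.mem_setOf_eq, Finset.union_empty, Nat.zero_le, true_and]
    constructor
    · rintro ⟨hGL, hGc⟩
      exact ⟨fun x hx => hsurj x (hGL hx), hGc⟩
    · rintro ⟨hGL, hGc⟩
      refine ⟨fun x hx => ?_, hGc⟩
      obtain ⟨i, hi, rfl⟩ := hGL x hx
      exact hvL i hi
  | succ n ih =>
    intro hn1 S hS
    have hn : n < Q.L.card := hn1
    set S' := S.erase (v n) with hS'def
    have hS' : ∀ x ∈ S', ∃ i, i < n ∧ v i = x := by
      intro x hx
      obtain ⟨hne, hxS⟩ := Finset.mem_erase.mp hx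
      obtain ⟨i, hi, rfl⟩ := hS x hxS
      rcases Nat.lt_succ_iff_lt_or_eq.mp hi with h | rfl
      · exact ⟨i, h, rfl⟩
      · exact absurd rfl hne
    have hcongr : iterOp Q v S n {G : Finset Q.Entry | G ⊆ Q.L ∧ Q.Compat G}
        = iterOp Q v S' n {G : Finset Q.Entry | G ⊆ Q.L ∧ Q.Compat G} := by
      refine iterOp_congr Q v S S' n (fun i hi => ?_) _
      rw [hS'def, Finset.mem_erase]
      have : v i ≠ v n := hvne i n hi hn
      tauto
    have hvnC : ∀ C₂ : Finset Q.Entry,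
        (∀ x ∈ C₂, ∃ i, n + 1 ≤ i ∧ i < Q.L.card ∧ v i = x) → v n ∉ C₂ := by
      intro C₂ hC₂ hmem
      obtain ⟨i, hi1, hi2, he⟩ := hC₂ (v n) hmem
      exact hvne n i hi1 hi2 he.symm
    simp only [iterOp, hcongr, ih hn.le S' hS']
    by_cases hvS : v n ∈ S
    · have hins : ∀ C₂ : Finset Q.Entry, insert (v n) C₂ ∪ S' = C₂ ∪ S := by
        intro C₂
        ext y
        simp only [Finset.mem_union, Finset.mem_insert, hS'def, Finset.mem_erase]
        by_cases hy : y = v n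
        · subst hy; tauto
        · tauto
      rw [if_pos hvS]
      ext C₂
      simp only [linkOp, Set.mem_setOf_eq]
      constructor
      · rintro ⟨⟨hA, _⟩, hvn, ⟨_, hc⟩⟩
        refine ⟨fun x hx => ?_, hins C₂ ▸ hc⟩
        obtain ⟨i, hi1, hi2, rfl⟩ := hA x hx
        rcases Nat.lt_or_ge n i with h | h
        · exact ⟨i, h, hi2, rfl⟩
        · exact absurd (Nat.le_antisymm h hi1 ▸ hx) hvn
      · rintro ⟨hA, hc⟩
        have hvn : v n ∉ C₂ := hvnC C₂ hA
        refine ⟨⟨fun x hx => ?_, ?_⟩, hvn, ⟨fun x hx => ?_, hins C₂ ▸ hc⟩⟩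
        · obtain ⟨i, hi1, hi2, rfl⟩ := hA x hx
          exact ⟨i, Nat.le_of_succ_le hi1, hi2, rfl⟩
        · exact Q.compat_mono (Finset.union_subset_union_right (Finset.erase_subset _ _)) hc
        · rcases Finset.mem_insert.mp hx with rfl | hx
          · exact ⟨n, le_refl n, hn, rfl⟩
          · obtain ⟨i, hi1, hi2, rfl⟩ := hA x hx
            exact ⟨i, Nat.le_of_succ_le hi1, hi2, rfl⟩
    · have hSS' : S' = S := Finset.erase_eq_of_notMem hvS
      rw [if_neg hvS]
      ext C₂
      simp only [delOp, Set.mem_setOf_eq, hS'def, Finset.erase_eq_of_notMem hvS]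
      constructor
      · rintro ⟨⟨hA, hc⟩, hvn⟩
        refine ⟨fun x hx => ?_, hc⟩
        obtain ⟨i, hi1, hi2, rfl⟩ := hA x hx
        rcases Nat.lt_or_ge n i with h | h
        · exact ⟨i, h, hi2, rfl⟩
        · exact absurd (Nat.le_antisymm h hi1 ▸ hx) hvn
      · rintro ⟨hA, hc⟩
        refine ⟨⟨fun x hx => ?_, hc⟩, hvnC C₂ hA⟩
        obtain ⟨i, hi1, hi2, rfl⟩ := hA x hx
        exact ⟨i, Nat.le_of_succ_le hi1, hi2, rfl⟩

/-- Description of the iterated link/deletion complex Δ_{ℓ,S}: for an enumeration v of L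
in increasing <_T order and S contained in the first ℓ points, Δ_{ℓ,S} consists exactly
of the sets C₂ of later points such that C₂ ∪ S is u-compatible. -/
theorem stmt15 (Q : BQData) (v : ℕ → Q.Entry)
    (hvL : ∀ i, i < Q.L.card → v i ∈ Q.L)
    (hsurj : ∀ x ∈ Q.L, ∃ i, i < Q.L.card ∧ v i = x)
    (hsorted : ∀ i j, i < j → j < Q.L.card → Q.ltT (v i) (v j))
    (ℓ : ℕ) (hℓ : ℓ ≤ Q.L.card)
    (S : Finset Q.Entry) (hS : ∀ x ∈ S, ∃ i, i < ℓ ∧ v i = x) :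
    iterOp Q v S ℓ {G : Finset Q.Entry | G ⊆ Q.L ∧ Q.Compat G} =
      {C₂ : Finset Q.Entry |
        (∀ x ∈ C₂, ∃ i, ℓ ≤ i ∧ i < Q.L.card ∧ v i = x) ∧ Q.Compat (C₂ ∪ S)} :=
  key_aux Q v hvL hsurj hsorted ℓ hℓ S hS
end

section
/- If a pure shellable simplicial complex Δ has the property that every codimension-1 face is contained in exactly one or two facets, and some codimension-1 face is contained in exactly one facet, then the reduced Euler characteristic of Δ is 0 if dim Δ ≥ 0 (that is, Δ is not a homology sphere: it has the homology of a point). -/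
/-!
The facet `F j` of a shelling adds to the complex exactly the faces of the interval
`[restriction F j, F j]`, so the reduced Euler characteristic is, up to sign, the number of
facets with `restriction F j = F j`, and it suffices to show that there are none.
For such a facet every `(d-1)`-face of `F j` lies in an earlier facet. The earlier facets form a
shellable complex without `(d-1)`-dimensional mod-2 homology, so `∂ F j` bounds a mod-2 sum of
earlier facets, and together with `F j` this gives a nonzero mod-2 `d`-cycle. Since every
`(d-1)`-face lies in at most two facets, adjacent facets carry the same coefficient in a cycle,
and the shelling connects all facets; so the cycle contains every facet, which is impossible at a
facet having a `(d-1)`-face that lies in no other facet.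
-/

open scoped Classical

open Finset Function

namespace Finset

variable {α : Type*} [DecidableEq α]

theorem exists_eq_erase_of_subset {s t : Finset α} (hst : s ⊆ t) (hcard : s.card + 1 = t.card) :
    ∃ a ∈ t, a ∉ s ∧ s = t.erase a := by
  obtain ⟨a, has, rfl⟩ := exists_eq_insert_iff.mpr ⟨hst, hcard⟩
  exact ⟨a, mem_insert_self a s, has, (erase_insert has).symm⟩

theorem sum_Icc_neg_one_pow_card {s t : Finset α} (hst : s ⊂ t) :
    ∑ u ∈ Icc s t, (-1 : ℤ) ^ u.card = 0 := by
  have hdisj : ∀ u ∈ (t \ s).powerset, Disjoint s u := fun u hu =>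
    disjoint_sdiff.mono_right (mem_powerset.mp hu)
  have hinj : Set.InjOn (s ∪ ·) (t \ s).powerset := fun u hu v hv huv => by
    rw [← union_sdiff_cancel_left (hdisj u hu), ← union_sdiff_cancel_left (hdisj v hv)]
    exact congrArg (· \ s) huv
  rw [Icc_eq_image_powerset hst.subset, sum_image hinj,
    sum_congr rfl fun u hu => by rw [card_union_of_disjoint (hdisj u hu), pow_add],
    ← mul_sum, sum_powerset_neg_one_pow_card_of_nonempty (sdiff_nonempty.mpr hst.2), mul_zero]

end Finset

namespace Shelling

variable {V : Type*} {N d : ℕ}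

def IsPrefixFace (F : Fin N → Finset V) (k : ℕ) (σ : Finset V) : Prop :=
  ∃ i : Fin N, (i : ℕ) < k ∧ σ ⊆ F i

-- `F j` meets the earlier facets in a pure `(d-1)`-dimensional complex.
def IsShelling (F : Fin N → Finset V) (d : ℕ) : Prop :=
  ∀ j : Fin N, 0 < (j : ℕ) → ∀ G : Finset V,
    G ⊆ F j → (∃ i, i < j ∧ G ⊆ F i) →
    ∃ G', G' ⊆ F j ∧ (∃ i, i < j ∧ G' ⊆ F i) ∧ G ⊆ G' ∧ G'.card = d

theorem IsPrefixFace.mono {F : Fin N → Finset V} {k : ℕ} {σ τ : Finset V}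
    (h : IsPrefixFace F k σ) (hτσ : τ ⊆ σ) : IsPrefixFace F k τ :=
  let ⟨i, hik, hσ⟩ := h; ⟨i, hik, hτσ.trans hσ⟩

section Restriction

variable [DecidableEq V]

noncomputable def restriction (F : Fin N → Finset V) (j : Fin N) : Finset V :=
  {v ∈ F j | IsPrefixFace F j ((F j).erase v)}

variable {F : Fin N → Finset V}

theorem mem_restriction {j : Fin N} {v : V} :
    v ∈ restriction F j ↔ v ∈ F j ∧ IsPrefixFace F j ((F j).erase v) :=
  mem_filter

theorem restriction_subset (F : Fin N → Finset V) (j : Fin N) : restriction F j ⊆ F j :=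
  filter_subset _ _

theorem isPrefixFace_iff_not_restriction_subset (hcard : ∀ j, (F j).card = d + 1)
    (hshell : IsShelling F d) {j : Fin N} {σ : Finset V} (hσ : σ ⊆ F j) :
    IsPrefixFace F j σ ↔ ¬ restriction F j ⊆ σ := by
  constructor
  · rintro ⟨i, hij, hσi⟩ hR
    obtain ⟨G, hGF, hGold, hσG, hGcard⟩ := hshell j (by omega) σ hσ ⟨i, hij, hσi⟩
    obtain ⟨v, hvF, hvG, rfl⟩ := exists_eq_erase_of_subset hGF (by rw [hGcard, hcard])
    exact hvG (hσG (hR (mem_restriction.mpr ⟨hvF, hGold⟩)))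
  · intro h
    obtain ⟨v, hvR, hvσ⟩ := not_subset.mp h
    exact (mem_restriction.mp hvR).2.mono (subset_erase.mpr ⟨hσ, hvσ⟩)

theorem disjoint_Icc_restriction (hcard : ∀ j, (F j).card = d + 1) (hshell : IsShelling F d)
    {a b : Fin N} (hab : a < b) :
    Disjoint (Icc (restriction F a) (F a)) (Icc (restriction F b) (F b)) := by
  refine disjoint_left.mpr fun σ hσa hσb => ?_
  rw [mem_Icc] at hσa hσb
  exact (isPrefixFace_iff_not_restriction_subset hcard hshell hσb.2).mp ⟨a, hab, hσa.2⟩ hσb.1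

theorem pairwise_disjoint_Icc_restriction (hcard : ∀ j, (F j).card = d + 1)
    (hshell : IsShelling F d) :
    Pairwise (Disjoint on fun j => Icc (restriction F j) (F j)) :=
  (pairwise_disjoint_on _).mpr fun _ _ => disjoint_Icc_restriction hcard hshell

theorem exists_mem_Icc_restriction (hcard : ∀ j, (F j).card = d + 1) (hshell : IsShelling F d)
    {σ : Finset V} {j : Fin N} (hσ : σ ⊆ F j) : ∃ i, σ ∈ Icc (restriction F i) (F i) := by
  obtain ⟨i, hσi, hmin⟩ := wellFounded_lt.has_min {i | σ ⊆ F i} ⟨j, hσ⟩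
  refine ⟨i, mem_Icc.mpr ⟨?_, hσi⟩⟩
  by_contra hR
  obtain ⟨i', hi', hσi'⟩ := (isPrefixFace_iff_not_restriction_subset hcard hshell hσi).mpr hR
  exact hmin i' hσi' hi'

theorem biUnion_Icc_restriction (hcard : ∀ j, (F j).card = d + 1) (hshell : IsShelling F d) :
    univ.biUnion (fun j => Icc (restriction F j) (F j)) = univ.biUnion fun j => (F j).powerset := by
  ext σ
  simp only [mem_biUnion, mem_univ, true_and, mem_powerset]
  exact ⟨fun ⟨j, hj⟩ => ⟨j, (mem_Icc.mp hj).2⟩,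
    fun ⟨_, hj⟩ => exists_mem_Icc_restriction hcard hshell hj⟩

end Restriction

def SupportedOnPrefix (F : Fin N → Finset V) (d k : ℕ) (z : Finset V → ZMod 2) : Prop :=
  ∀ G, z G ≠ 0 → G.card = d ∧ IsPrefixFace F k G

theorem SupportedOnPrefix.add {F : Fin N → Finset V} {k : ℕ} {z z' : Finset V → ZMod 2}
    (hz : SupportedOnPrefix F d k z) (hz' : SupportedOnPrefix F d k z') :
    SupportedOnPrefix F d k (z + z') := fun G hG => by
  by_cases h : z G = 0
  · exact hz' G fun h' => hG (by simp [h, h'])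
  · exact hz G h

section Chains

variable [DecidableEq V] {F : Fin N → Finset V}

def vertices (F : Fin N → Finset V) : Finset V :=
  univ.biUnion F

/- Mod-2 chains are functions on vertex sets, a `d`-set being a `(d-1)`-face;
`boundary F d c` is the boundary of the `d`-chain `∑ i, c i • F i`. -/
def boundary (F : Fin N → Finset V) (d : ℕ) (c : Fin N → ZMod 2) (G : Finset V) : ZMod 2 :=
  ∑ i, if G.card = d ∧ G ⊆ F i then c i else 0

def IsCycle (F : Fin N → Finset V) (d : ℕ) (z : Finset V → ZMod 2) : Prop :=
  ∀ τ : Finset V, τ.card + 1 = d → ∑ v ∈ vertices F \ τ, z (insert v τ) = 0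

theorem boundary_add (c c' : Fin N → ZMod 2) :
    boundary F d (c + c') = boundary F d c + boundary F d c' := by
  funext G
  simp only [boundary, Pi.add_apply, ← sum_add_distrib, ite_add_zero]

theorem boundary_zero : boundary F d 0 = 0 := by
  funext G
  simp [boundary]

theorem boundary_single (j : Fin N) (a : ZMod 2) (G : Finset V) :
    boundary F d (Pi.single j a) G = if G.card = d ∧ G ⊆ F j then a else 0 := by
  rw [boundary, sum_eq_single j (fun i _ hij => by simp [hij]) (by simp)]
  simp

theorem boundary_apply_of_card (t : Fin N → ZMod 2) {G : Finset V} (hG : G.card = d) :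
    boundary F d t G = ∑ i ∈ {i | G ⊆ F i}, t i := by
  simp only [boundary, hG, true_and, sum_filter]

theorem IsCycle.add {z z' : Finset V → ZMod 2} (hz : IsCycle F d z) (hz' : IsCycle F d z') :
    IsCycle F d (z + z') := fun τ hτ => by
  simp only [Pi.add_apply, sum_add_distrib, hz τ hτ, hz' τ hτ, add_zero]

theorem isCycle_boundary (hcard : ∀ j, (F j).card = d + 1) (c : Fin N → ZMod 2) :
    IsCycle F d (boundary F d c) := by
  intro τ hτ
  simp only [boundary]
  rw [sum_comm]
  refine sum_eq_zero fun i _ => ?_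
  rw [← sum_filter, sum_const]
  by_cases hτi : τ ⊆ F i
  · have hfilter :
        {v ∈ vertices F \ τ | (insert v τ).card = d ∧ insert v τ ⊆ F i} = F i \ τ := by
      ext v
      simp only [mem_filter, mem_sdiff, vertices, mem_biUnion, mem_univ, true_and,
        insert_subset_iff, hτi, and_true]
      constructor
      · rintro ⟨⟨-, hvτ⟩, -, hvi⟩
        exact ⟨hvi, hvτ⟩
      · rintro ⟨hvi, hvτ⟩
        exact ⟨⟨⟨i, hvi⟩, hvτ⟩, by rw [card_insert_of_notMem hvτ, hτ], hvi⟩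
    rw [hfilter, card_sdiff_of_subset hτi, hcard, ← hτ,
      show τ.card + 1 + 1 - τ.card = 2 by omega, CharTwo.two_nsmul]
  · rw [filter_false_of_mem fun v _ h => hτi ((subset_insert v τ).trans h.2), card_empty,
      zero_smul]

theorem supportedOnPrefix_boundary_single (j : Fin N) (a : ZMod 2) :
    SupportedOnPrefix F d (j + 1) (boundary F d (Pi.single j a)) := by
  intro G hG
  rw [boundary_single] at hG
  split_ifs at hG with h
  · exact ⟨h.1, j, lt_add_one _, h.2⟩
  · exact absurd rfl hG

theorem SupportedOnPrefix.of_succ (hcard : ∀ j, (F j).card = d + 1) {j : Fin N}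
    {z : Finset V → ZMod 2} (hz : SupportedOnPrefix F d (j + 1) z)
    (hnew : ∀ v ∈ F j, v ∉ restriction F j → z ((F j).erase v) = 0) :
    SupportedOnPrefix F d j z := by
  intro G hG
  obtain ⟨hGcard, i, hij, hGi⟩ := hz G hG
  refine ⟨hGcard, ?_⟩
  rcases Nat.lt_succ_iff_lt_or_eq.mp hij with hij | hij
  · exact ⟨i, hij, hGi⟩
  · obtain rfl : i = j := Fin.ext hij
    obtain ⟨v, hvF, -, rfl⟩ := exists_eq_erase_of_subset hGi (by rw [hGcard, hcard])
    by_contra hold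
    exact hG (hnew v hvF fun hvR => hold (mem_restriction.mp hvR).2)

theorem IsCycle.apply_erase_eq (hcard : ∀ j, (F j).card = d + 1) (hshell : IsShelling F d)
    {j : Fin N} {z : Finset V → ZMod 2} (hcyc : IsCycle F d z)
    (hz : SupportedOnPrefix F d (j + 1) z) {v w : V} (hv : v ∈ F j) (hvR : v ∉ restriction F j)
    (hw : w ∈ F j) (hwR : w ∉ restriction F j) : z ((F j).erase v) = z ((F j).erase w) := by
  rcases eq_or_ne v w with rfl | hvw
  · rfl
  -- `τ` is new at step `j`, so its only cofaces among the first `j + 1` facets' faces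
  -- are `F j \ v` and `F j \ w`.
  set τ := ((F j).erase w).erase v with hτ
  have hvτ : insert v τ = (F j).erase w := insert_erase (mem_erase.mpr ⟨hvw, hv⟩)
  have hwτ : insert w τ = (F j).erase v := by
    rw [hτ, erase_right_comm, insert_erase (mem_erase.mpr ⟨hvw.symm, hw⟩)]
  have hvnτ : v ∉ τ := notMem_erase v _
  have hwnτ : w ∉ τ := fun h => notMem_erase w (F j) (mem_of_mem_erase h)
  have hτnew : ¬ IsPrefixFace F j τ := by
    rw [isPrefixFace_iff_not_restriction_subset hcard hshell
      ((erase_subset _ _).trans (erase_subset _ _)), not_not]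
    exact subset_erase.mpr ⟨subset_erase.mpr ⟨restriction_subset F j, hwR⟩, hvR⟩
  have hτcard : τ.card + 1 = d := by
    rw [← card_insert_of_notMem hvnτ, hvτ, card_erase_of_mem hw, hcard, Nat.add_sub_cancel]
  have hlink : ∑ u ∈ ({v, w} : Finset V), z (insert u τ) = 0 := by
    rw [sum_subset _ fun u hu huvw => ?_]
    · exact hcyc τ hτcard
    · simp only [insert_subset_iff, singleton_subset_iff, mem_sdiff, vertices, mem_biUnion,
        mem_univ, true_and]
      exact ⟨⟨⟨j, hv⟩, hvnτ⟩, ⟨j, hw⟩, hwnτ⟩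
    · by_contra h
      obtain ⟨-, i, hij, hi⟩ := hz _ h
      rcases Nat.lt_succ_iff_lt_or_eq.mp hij with hij | hij
      · exact hτnew ⟨i, hij, (subset_insert u τ).trans hi⟩
      · obtain rfl : i = j := Fin.ext hij
        simp only [mem_insert, mem_singleton, not_or] at huvw
        exact (mem_sdiff.mp hu).2 (mem_erase.mpr ⟨huvw.1, mem_erase.mpr ⟨huvw.2,
          (insert_subset_iff.mp hi).1⟩⟩)
  rwa [sum_pair hvw, hvτ, hwτ, CharTwo.add_eq_zero, eq_comm] at hlink

theorem IsCycle.exists_supportedOnPrefix_add_boundary_single (hcard : ∀ j, (F j).card = d + 1)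
    (hshell : IsShelling F d) {j : Fin N} {z : Finset V → ZMod 2} (hcyc : IsCycle F d z)
    (hz : SupportedOnPrefix F d (j + 1) z) :
    ∃ a, SupportedOnPrefix F d j (z + boundary F d (Pi.single j a)) := by
  by_cases hclosed : F j ⊆ restriction F j
  · refine ⟨0, ?_⟩
    rw [Pi.single_zero, boundary_zero, add_zero]
    exact hz.of_succ hcard fun v hv hvR => absurd (hclosed hv) hvR
  · obtain ⟨w, hw, hwR⟩ := not_subset.mp hclosed
    have hcyc' := hcyc.add (isCycle_boundary hcard (Pi.single j (z ((F j).erase w))))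
    have hz' := hz.add (supportedOnPrefix_boundary_single j (z ((F j).erase w)))
    refine ⟨_, hz'.of_succ hcard fun v hv hvR => ?_⟩
    rw [hcyc'.apply_erase_eq hcard hshell hz' hv hvR hw hwR, Pi.add_apply, boundary_single,
      if_pos ⟨by rw [card_erase_of_mem hw, hcard, Nat.add_sub_cancel], erase_subset w (F j)⟩,
      CharTwo.add_self_eq_zero]

theorem IsCycle.exists_eq_boundary (hcard : ∀ j, (F j).card = d + 1) (hshell : IsShelling F d)
    {k : ℕ} {z : Finset V → ZMod 2} (hcyc : IsCycle F d z) (hz : SupportedOnPrefix F d k z) :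
    ∃ c : Fin N → ZMod 2, (∀ i, c i ≠ 0 → (i : ℕ) < k) ∧ z = boundary F d c := by
  induction k generalizing z with
  | zero =>
    refine ⟨0, fun i h => absurd rfl h, ?_⟩
    rw [boundary_zero]
    funext G
    by_contra h
    obtain ⟨-, i, hi, -⟩ := hz G h
    exact Nat.not_lt_zero _ hi
  | succ k ih =>
    by_cases hk : k < N
    · obtain ⟨a, ha⟩ := hcyc.exists_supportedOnPrefix_add_boundary_single hcard hshell
        (j := ⟨k, hk⟩) hz
      obtain ⟨c, hc, hzc⟩ := ih (hcyc.add (isCycle_boundary hcard _)) ha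
      refine ⟨c + Pi.single ⟨k, hk⟩ a, fun i hi => ?_, ?_⟩
      · by_cases hik : i = ⟨k, hk⟩
        · simp [hik]
        · rw [Pi.add_apply, Pi.single_eq_of_ne hik, add_zero] at hi
          exact (hc i hi).trans (lt_add_one k)
      · rw [boundary_add, ← hzc, add_assoc, CharTwo.add_self_eq_zero, add_zero]
    · have hz' : SupportedOnPrefix F d k z := fun G hG =>
        let ⟨hGcard, i, _, hGi⟩ := hz G hG
        ⟨hGcard, i, by omega, hGi⟩
      obtain ⟨c, hc, hzc⟩ := ih hcyc hz'
      exact ⟨c, fun i hi => (hc i hi).trans (lt_add_one k), hzc⟩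

theorem exists_lt_apply_eq_of_boundary_eq_zero (hshell : IsShelling F d)
    (hle2 : ∀ G : Finset V, G.card = d → ∀ i, G ⊆ F i → #{i | G ⊆ F i} ≤ 2)
    {t : Fin N → ZMod 2} (ht : boundary F d t = 0) {i : Fin N} (hi : 0 < (i : ℕ)) :
    ∃ a < i, t i = t a := by
  -- the shelling condition at the empty face yields a `(d-1)`-face shared with an earlier facet
  obtain ⟨G, hGi, ⟨a, hai, hGa⟩, -, hGcard⟩ :=
    hshell i hi ∅ (empty_subset _) ⟨⟨0, i.pos⟩, hi, empty_subset _⟩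
  have hpair : ({i | G ⊆ F i} : Finset (Fin N)) = {a, i} := by
    refine (eq_of_subset_of_card_le (by simp [insert_subset_iff, hGa, hGi]) ?_).symm
    rw [card_pair hai.ne]
    exact hle2 G hGcard i hGi
  have hG := congrFun ht G
  rw [boundary_apply_of_card t hGcard, hpair, sum_pair hai.ne, Pi.zero_apply,
    CharTwo.add_eq_zero] at hG
  exact ⟨a, hai, hG.symm⟩

theorem eq_zero_of_boundary_eq_zero (hshell : IsShelling F d)
    (hle2 : ∀ G : Finset V, G.card = d → ∀ i, G ⊆ F i → #{i | G ⊆ F i} ≤ 2)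
    (hone : ∃ G : Finset V, G.card = d ∧ #{i | G ⊆ F i} = 1)
    {t : Fin N → ZMod 2} (ht : boundary F d t = 0) : t = 0 := by
  have hconst : ∀ i : Fin N, t i = t ⟨0, i.pos⟩ := by
    intro i
    induction i using WellFoundedLT.induction with
    | _ i ih =>
      rcases Nat.eq_zero_or_pos i with hi | hi
      · exact congrArg t (Fin.ext hi)
      · obtain ⟨a, hai, hta⟩ := exists_lt_apply_eq_of_boundary_eq_zero hshell hle2 ht hi
        rw [hta, ih a hai]
  obtain ⟨G, hGcard, hG⟩ := hone
  obtain ⟨b, hb⟩ := card_eq_one.mp hG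
  have htb := congrFun ht G
  rw [boundary_apply_of_card t hGcard, hb, sum_singleton] at htb
  funext i
  exact (hconst i).trans ((hconst b).symm.trans htb)

theorem restriction_ssubset (hcard : ∀ j, (F j).card = d + 1) (hshell : IsShelling F d)
    (hle2 : ∀ G : Finset V, G.card = d → ∀ i, G ⊆ F i → #{i | G ⊆ F i} ≤ 2)
    (hone : ∃ G : Finset V, G.card = d ∧ #{i | G ⊆ F i} = 1) (j : Fin N) :
    restriction F j ⊂ F j := by
  refine (restriction_subset F j).ssubset_of_ne fun hclosed => ?_
  have hz : SupportedOnPrefix F d j (boundary F d (Pi.single j 1)) :=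
    (supportedOnPrefix_boundary_single j 1).of_succ hcard fun v hv hvR =>
      absurd (hclosed ▸ hv) hvR
  obtain ⟨c, hc, hzc⟩ := (isCycle_boundary hcard _).exists_eq_boundary hcard hshell hz
  have ht : boundary F d (c + Pi.single j 1) = 0 := by
    rw [boundary_add, ← hzc, CharTwo.add_self_eq_zero]
  have hcj : c j = 0 := by
    by_contra h
    exact lt_irrefl _ (hc j h)
  simpa [hcj] using congrFun (eq_zero_of_boundary_eq_zero hshell hle2 hone ht) j

end Chains

end Shelling

open Shelling

theorem stmt18_general {V : Type*} [DecidableEq V]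
    (Δ : Finset (Finset V)) (d : ℕ)
    (hdown : ∀ σ ∈ Δ, ∀ τ, τ ⊆ σ → τ ∈ Δ)
    (hpure : ∀ σ ∈ Δ, ∃ F ∈ Δ, σ ⊆ F ∧ F.card = d + 1)
    (N : ℕ) (F : Fin N → Finset V)
    (hF : ∀ j, F j ∈ Δ ∧ (F j).card = d + 1)
    (hFall : ∀ σ ∈ Δ, σ.card = d + 1 → ∃ j, F j = σ)
    (hshell : ∀ j : Fin N, 0 < (j : ℕ) → ∀ G : Finset V,
      G ⊆ F j → (∃ i, i < j ∧ G ⊆ F i) →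
      ∃ G', G' ⊆ F j ∧ (∃ i, i < j ∧ G' ⊆ F i) ∧ G ⊆ G' ∧ G'.card = d)
    (hle2 : ∀ G ∈ Δ, G.card = d →
      (Finset.univ.filter fun j : Fin N => G ⊆ F j).card ≤ 2)
    (hone : ∃ G ∈ Δ, G.card = d ∧
      (Finset.univ.filter fun j : Fin N => G ⊆ F j).card = 1) :
    (∑ σ ∈ Δ, (-1 : ℤ) ^ (σ.card + 1)) = 0 := by
  have hcard : ∀ j, (F j).card = d + 1 := fun j => (hF j).2
  have hΔ : Δ = univ.biUnion fun j => (F j).powerset := by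
    ext σ
    simp only [mem_biUnion, mem_univ, true_and, mem_powerset]
    refine ⟨fun hσ => ?_, fun ⟨j, hσj⟩ => hdown _ (hF j).1 σ hσj⟩
    obtain ⟨G, hGΔ, hσG, hGcard⟩ := hpure σ hσ
    obtain ⟨j, rfl⟩ := hFall G hGΔ hGcard
    exact ⟨j, hσG⟩
  have hball : ∀ j, restriction F j ⊂ F j := restriction_ssubset hcard hshell
    (fun G hG i hGi => hle2 G (hdown _ (hF i).1 G hGi) hG) (let ⟨G, _, hG⟩ := hone; ⟨G, hG⟩)
  rw [hΔ, ← biUnion_Icc_restriction hcard hshell,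
    sum_biUnion ((pairwise_disjoint_Icc_restriction hcard hshell).set_pairwise _)]
  exact sum_eq_zero fun j _ => by
    simp only [pow_succ, ← sum_mul, sum_Icc_neg_one_pow_card (hball j), zero_mul]

/-- A pure d-dimensional shellable simplicial complex in which every (d-1)-face lies in
at most two facets and some (d-1)-face lies in exactly one facet has reduced Euler
characteristic 0 (it is a ball, hence has the homology of a point). -/
theorem stmt18 {V : Type*} [DecidableEq V]
    (Δ : Finset (Finset V)) (d : ℕ)
    (hne : Δ.Nonempty)
    (hdown : ∀ σ ∈ Δ, ∀ τ, τ ⊆ σ → τ ∈ Δ)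
    (hpure : ∀ σ ∈ Δ, ∃ F ∈ Δ, σ ⊆ F ∧ F.card = d + 1)
    (N : ℕ) (F : Fin N → Finset V)
    (hF : ∀ j, F j ∈ Δ ∧ (F j).card = d + 1)
    (hFinj : Function.Injective F)
    (hFall : ∀ σ ∈ Δ, σ.card = d + 1 → ∃ j, F j = σ)
    (hshell : ∀ j : Fin N, 0 < (j : ℕ) → ∀ G : Finset V,
      G ⊆ F j → (∃ i, i < j ∧ G ⊆ F i) →
      ∃ G', G' ⊆ F j ∧ (∃ i, i < j ∧ G' ⊆ F i) ∧ G ⊆ G' ∧ G'.card = d)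
    (hle2 : ∀ G ∈ Δ, G.card = d →
      (Finset.univ.filter fun j : Fin N => G ⊆ F j).card ≤ 2)
    (hone : ∃ G ∈ Δ, G.card = d ∧
      (Finset.univ.filter fun j : Fin N => G ⊆ F j).card = 1) :
    (∑ σ ∈ Δ, (-1 : ℤ) ^ (σ.card + 1)) = 0 :=
  stmt18_general Δ d hdown hpure N F hF hFall hshell hle2 hone
end
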